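/- arXiv:2605.26367 — 7 statements merged into one kernel-verified Lean document; each statement's English description precedes it below -/
import Mathlib

section
/- Let (N, O, d, (m_j)_{j∈O}, (c_j)_{j∈O}) be a market. Then the set ΔD of implementable random allocations (the convex hull of the set D of allowable deterministic allocations) equals the set R = {μ ∈ [0,1]^{N×O} : ∑_{j∈O} μ_{ij} = d for every agent i ∈ N, and m_j ≤ ∑_{i∈N} μ_{ij} ≤ c_j for every object j ∈ O}. -/
/-!
By Krein–Milman the compact convex polytope `R` is the closed convex hull of its extreme points,
and `convexHull ℝ D` is closed because `D` is finite, so it suffices that every extreme point of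
`R` is a `0`–`1` matrix. Let `μ ∈ R` have a fractional entry and let `S` be its set of fractional
cells. A row meeting `S` meets it at least twice, since its sum `d` is an integer, and so does a
tight column (one whose sum is `m j` or `c j`). Hence the homogeneous system "zero sum on each row
and each tight column meeting `S`" has fewer equations than `S` has cells, unless every column
meeting `S` is tight; then there are at most as many equations as cells, but they are dependent.
A nonzero solution `δ` supported on `S` satisfies `μ ± ε • δ ∈ R` for small `ε > 0`, so `μ` is not
extreme.
-/

open Finset Filter Topology

theorem exists_ne_mem_Ioo_of_sum_eq_intCast {ι : Type*} [Fintype ι] {x : ι → ℝ} {n : ℤ}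
    (hsum : ∑ k, x k = n) (hx : ∀ k, x k ∈ Set.Icc 0 1) {k₀ : ι} (hk₀ : x k₀ ∈ Set.Ioo 0 1) :
    ∃ k ≠ k₀, x k ∈ Set.Ioo 0 1 := by
  classical
  by_contra! h
  have hint : ∀ k ∈ univ.erase k₀, x k = (round (x k) : ℝ) := fun k hk => by
    have : x k ∈ Set.Icc (0 : ℝ) 1 \ Set.Ioo 0 1 := ⟨hx k, h k (ne_of_mem_erase hk)⟩
    rw [Set.Icc_sdiff_Ioo_same zero_le_one, Set.mem_insert_iff, Set.mem_singleton_iff] at this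
    rcases this with h | h <;> simp [h]
  have hk₀int : x k₀ = ((n - ∑ k ∈ univ.erase k₀, round (x k) : ℤ) : ℝ) := by
    rw [← add_sum_erase _ _ (mem_univ k₀), sum_congr rfl hint] at hsum
    push_cast
    linarith
  obtain ⟨h0, h1⟩ := hk₀
  rw [hk₀int, Int.cast_pos] at h0
  rw [hk₀int, ← Int.cast_one, Int.cast_lt] at h1
  omega

theorem card_image_add_card_filter_le {α β : Type*} [DecidableEq β] (s : Finset α) (f : α → β)
    (p : β → Prop) [DecidablePred p] (h : ∀ b ∈ s.image f, p b → 2 ≤ #{a ∈ s | f a = b}) :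
    #(s.image f) + #{b ∈ s.image f | p b} ≤ #s := by
  rw [card_eq_sum_card_fiberwise fun a ha => mem_image_of_mem f ha, card_filter,
    card_eq_sum_ones, ← sum_add_distrib]
  refine sum_le_sum fun b hb => ?_
  obtain ⟨a, ha, rfl⟩ := mem_image.mp hb
  have : 1 ≤ #{a' ∈ s | f a' = f a} := card_pos.mpr ⟨a, mem_filter.mpr ⟨ha, rfl⟩⟩
  split_ifs with hp
  · exact h _ hb hp
  · simpa

theorem eventually_add_mul_mem {a b : ℝ} {U : Set ℝ} (ha : a ∈ U) (hU : b ≠ 0 → U ∈ 𝓝 a) :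
    ∀ᶠ t in 𝓝 0, a + t * b ∈ U := by
  by_cases hb : b = 0
  · simp [hb, ha]
  · have : Tendsto (fun t : ℝ => a + t * b) (𝓝 0) (𝓝 a) := by
      simpa using ((tendsto_id.mul_const b).const_add a : Tendsto _ (𝓝 (0 : ℝ)) _)
    exact this (hU hb)

theorem exists_pos_and_neg_of_eventually_nhds_zero {p : ℝ → Prop} (h : ∀ᶠ t in 𝓝 0, p t) :
    ∃ ε > 0, p ε ∧ p (-ε) := by
  have hneg : ∀ᶠ t in 𝓝 0, p (-t) := (continuous_neg.tendsto' 0 0 neg_zero).eventually h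
  exact (eventually_mem_nhdsWithin.and ((h.and hneg).filter_mono nhdsWithin_le_nhds) :
    ∀ᶠ t in 𝓝[>] (0 : ℝ), _).exists

theorem eq_zero_of_add_mem_of_sub_mem_of_mem_extremePoints {E : Type*} [AddCommGroup E]
    [Module ℝ E] {A : Set E} {x v : E} (hx : x ∈ A.extremePoints ℝ) (hadd : x + v ∈ A)
    (hsub : x - v ∈ A) : v = 0 :=
  add_eq_left.mp (hx.2 hadd hsub (mem_openSegment_add_sub x v))

theorem sum_eq_zero_of_notMem_image_fst {N O M : Type*} [Fintype O] [DecidableEq N]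
    [AddCommMonoid M] {S : Finset (N × O)} {δ : N → O → M} (hδ : ∀ i j, (i, j) ∉ S → δ i j = 0)
    {i : N} (hi : i ∉ S.image Prod.fst) :
    ∑ j, δ i j = 0 :=
  sum_eq_zero fun j _ => hδ i j fun h => hi (mem_image_of_mem _ h)

theorem sum_eq_zero_of_notMem_image_snd {N O M : Type*} [Fintype N] [DecidableEq O]
    [AddCommMonoid M] {S : Finset (N × O)} {δ : N → O → M} (hδ : ∀ i j, (i, j) ∉ S → δ i j = 0)
    {j : O} (hj : j ∉ S.image Prod.snd) :
    ∑ i, δ i j = 0 :=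
  sum_eq_zero fun i _ => hδ i j fun h => hj (mem_image_of_mem _ h)

section Allocation

variable {N O : Type*} [Fintype N] [Fintype O]

theorem exists_ne_zero_supported_sums_eq_zero {K : Type*} [Field K] {S : Finset (N × O)}
    {I : Finset N} {J : Finset O} (h : #I + #J < #S) :
    ∃ δ : N → O → K, δ ≠ 0 ∧ (∀ i j, (i, j) ∉ S → δ i j = 0) ∧
      (∀ i ∈ I, ∑ j, δ i j = 0) ∧ ∀ j ∈ J, ∑ i, δ i j = 0 := by
  classical
  let Φ : (N → O → K) →ₗ[K] (↥Sᶜ → K) × (↥I → K) × (↥J → K) :=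
    { toFun δ := (fun p => δ p.1.1 p.1.2, fun i => ∑ j, δ i j, fun j => ∑ i, δ i j)
      map_add' _ _ := by ext <;> simp [sum_add_distrib]
      map_smul' _ _ := by ext <;> simp [mul_sum] }
  have hdim : Module.finrank K ((↥Sᶜ → K) × (↥I → K) × (↥J → K)) <
      Module.finrank K (N → O → K) := by
    have := S.card_le_univ
    simp [Module.finrank_pi_fintype, Module.finrank_prod] at this ⊢
    omega
  obtain ⟨δ, hδ, hδ0⟩ := Submodule.exists_mem_ne_zero_of_ne_bot
    (LinearMap.ker_ne_bot_of_finrank_lt (f := Φ) hdim)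
  simp only [LinearMap.mem_ker, Φ, LinearMap.coe_mk, AddHom.coe_mk, Prod.mk_eq_zero,
    funext_iff, Pi.zero_apply, Subtype.forall, Finset.mem_compl] at hδ
  exact ⟨δ, hδ0, fun i j => hδ.1 (i, j), hδ.2.1, hδ.2.2⟩

theorem exists_ne_zero_supported_sums_eq_zero_of_card_le {K : Type*} [Field K] [DecidableEq N]
    [DecidableEq O] {S : Finset (N × O)} (hS : S.Nonempty)
    (h : #(S.image Prod.fst) + #(S.image Prod.snd) ≤ #S) :
    ∃ δ : N → O → K, δ ≠ 0 ∧ (∀ i j, (i, j) ∉ S → δ i j = 0) ∧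
      (∀ i, ∑ j, δ i j = 0) ∧ ∀ j, ∑ i, δ i j = 0 := by
  classical
  obtain ⟨i₀, hi₀⟩ := hS.image Prod.fst
  have hcard : #((S.image Prod.fst).erase i₀) + #(S.image Prod.snd) < #S := by
    have := card_pos.mpr ⟨i₀, hi₀⟩
    rw [card_erase_of_mem hi₀]
    omega
  obtain ⟨δ, hδ0, hδS, hrow, hcol⟩ := exists_ne_zero_supported_sums_eq_zero (K := K) hcard
  have hcol' : ∀ j, ∑ i, δ i j = 0 := fun j => by
    by_cases hj : j ∈ S.image Prod.snd
    exacts [hcol j hj, sum_eq_zero_of_notMem_image_snd hδS hj]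
  have hrow' : ∀ i ≠ i₀, ∑ j, δ i j = 0 := fun i hi => by
    by_cases hi' : i ∈ S.image Prod.fst
    exacts [hrow i (mem_erase.mpr ⟨hi, hi'⟩), sum_eq_zero_of_notMem_image_fst hδS hi']
  -- The row equation of `i₀` is the sum of all column equations minus the other row equations.
  have hrow₀ : ∑ j, δ i₀ j = 0 := by
    rw [← sum_eq_single i₀ (fun i _ hi => hrow' i hi) fun h => absurd (mem_univ i₀) h, sum_comm]
    exact sum_eq_zero fun j _ => hcol' j
  refine ⟨δ, hδ0, hδS, fun i => ?_, hcol'⟩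
  by_cases hi : i = i₀
  · exact hi ▸ hrow₀
  · exact hrow' i hi

noncomputable def fractionalCells (μ : N → O → ℝ) : Finset (N × O) :=
  {p | μ p.1 p.2 ∈ Set.Ioo 0 1}

@[simp]
theorem mem_fractionalCells {μ : N → O → ℝ} {i : N} {j : O} :
    (i, j) ∈ fractionalCells μ ↔ μ i j ∈ Set.Ioo 0 1 := by
  simp [fractionalCells]

theorem two_le_card_fractionalCells_row [DecidableEq N] {μ : N → O → ℝ}
    (hμ : ∀ i j, μ i j ∈ Set.Icc 0 1) {i : N} (hrow : ∃ n : ℤ, ∑ j, μ i j = n)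
    (hi : i ∈ (fractionalCells μ).image Prod.fst) : 2 ≤ #{p ∈ fractionalCells μ | p.1 = i} := by
  obtain ⟨⟨i, j⟩, hij, rfl⟩ := mem_image.mp hi
  obtain ⟨n, hn⟩ := hrow
  obtain ⟨k, hkj, hik⟩ :=
    exists_ne_mem_Ioo_of_sum_eq_intCast hn (hμ i) (mem_fractionalCells.mp hij)
  exact one_lt_card.mpr ⟨(i, j), by simpa using hij, (i, k), by simpa using hik,
    by simpa using hkj.symm⟩

theorem two_le_card_fractionalCells_col [DecidableEq O] {μ : N → O → ℝ}
    (hμ : ∀ i j, μ i j ∈ Set.Icc 0 1) {j : O} (hcol : ∃ n : ℤ, ∑ i, μ i j = n)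
    (hj : j ∈ (fractionalCells μ).image Prod.snd) : 2 ≤ #{p ∈ fractionalCells μ | p.2 = j} := by
  obtain ⟨⟨i, j⟩, hij, rfl⟩ := mem_image.mp hj
  obtain ⟨n, hn⟩ := hcol
  obtain ⟨k, hki, hkj⟩ :=
    exists_ne_mem_Ioo_of_sum_eq_intCast hn (hμ · j) (mem_fractionalCells.mp hij)
  exact one_lt_card.mpr ⟨(i, j), by simpa using hij, (k, j), by simpa using hkj,
    by simpa using hki.symm⟩

theorem exists_ne_zero_supported_fractional_sums_eq_zero {μ : N → O → ℝ}
    (hμ : ∀ i j, μ i j ∈ Set.Icc 0 1) (hrow : ∀ i, ∃ n : ℤ, ∑ j, μ i j = n) {T : Set O}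
    (hT : ∀ j ∈ T, ∃ n : ℤ, ∑ i, μ i j = n) {i₀ : N} {j₀ : O} (h₀ : μ i₀ j₀ ∈ Set.Ioo 0 1) :
    ∃ δ : N → O → ℝ, δ ≠ 0 ∧ (∀ i j, μ i j ∉ Set.Ioo 0 1 → δ i j = 0) ∧
      (∀ i, ∑ j, δ i j = 0) ∧ ∀ j ∈ T, ∑ i, δ i j = 0 := by
  classical
  set S := fractionalCells μ
  have hI := card_image_add_card_filter_le S Prod.fst (fun _ => True)
    fun i hi _ => two_le_card_fractionalCells_row hμ (hrow i) hi
  have hJ := card_image_add_card_filter_le S Prod.snd (· ∈ T)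
    fun j hj hjT => two_le_card_fractionalCells_col hμ (hT j hjT) hj
  rw [filter_true_of_mem fun _ _ => trivial] at hI
  have hδμ {δ : N → O → ℝ} (hδS : ∀ i j, (i, j) ∉ S → δ i j = 0) (i j) (h : μ i j ∉ Set.Ioo 0 1) :
      δ i j = 0 := hδS i j (mem_fractionalCells.not.mpr h)
  by_cases hJT : ∀ j ∈ S.image Prod.snd, j ∈ T
  · rw [filter_true_of_mem hJT] at hJ
    obtain ⟨δ, hδ0, hδS, hrow, hcol⟩ := exists_ne_zero_supported_sums_eq_zero_of_card_le (K := ℝ)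
      (S := S) ⟨_, mem_fractionalCells.mpr h₀⟩ (by omega)
    exact ⟨δ, hδ0, hδμ hδS, hrow, fun j _ => hcol j⟩
  · obtain ⟨j₁, hj₁, hj₁T⟩ : ∃ j ∈ S.image Prod.snd, j ∉ T := by simpa using hJT
    have : #{j ∈ S.image Prod.snd | j ∈ T} < #(S.image Prod.snd) :=
      card_lt_card (filter_ssubset.mpr ⟨j₁, hj₁, hj₁T⟩)
    obtain ⟨δ, hδ0, hδS, hrow, hcol⟩ := exists_ne_zero_supported_sums_eq_zero (K := ℝ) (S := S)
      (I := S.image Prod.fst) (J := {j ∈ S.image Prod.snd | j ∈ T}) (by omega)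
    refine ⟨δ, hδ0, hδμ hδS, fun i => ?_, fun j hjT => ?_⟩
    · by_cases hi : i ∈ S.image Prod.fst
      exacts [hrow i hi, sum_eq_zero_of_notMem_image_fst hδS hi]
    · by_cases hj : j ∈ S.image Prod.snd
      exacts [hcol j (mem_filter.mpr ⟨hj, hjT⟩), sum_eq_zero_of_notMem_image_snd hδS hj]

variable (N) in
def allocationPolytope (d : ℕ) (m c : O → ℕ) : Set (N → O → ℝ) :=
  {μ | (∀ i j, μ i j ∈ Set.Icc 0 1) ∧ (∀ i, ∑ j, μ i j = d) ∧
    ∀ j, ∑ i, μ i j ∈ Set.Icc (m j : ℝ) (c j)}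

variable {d : ℕ} {m c : O → ℕ}

theorem convex_allocationPolytope : Convex ℝ (allocationPolytope N d m c) := by
  rintro x ⟨hx01, hxrow, hxcol⟩ y ⟨hy01, hyrow, hycol⟩ a b ha hb hab
  have hrow i : ∑ j, (a • x + b • y) i j = a * ∑ j, x i j + b * ∑ j, y i j := by
    simp [sum_add_distrib, mul_sum]
  have hcol j : ∑ i, (a • x + b • y) i j = a * ∑ i, x i j + b * ∑ i, y i j := by
    simp [sum_add_distrib, mul_sum]
  refine ⟨fun i j => convex_Icc 0 1 (hx01 i j) (hy01 i j) ha hb hab, fun i => ?_, fun j => ?_⟩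
  · rw [hrow, hxrow, hyrow, ← add_mul, hab, one_mul]
  · rw [hcol]
    exact convex_Icc _ _ (hxcol j) (hycol j) ha hb hab

theorem isCompact_allocationPolytope : IsCompact (allocationPolytope N d m c) := by
  have hbox : IsCompact (Set.univ.pi fun _ : N => Set.univ.pi fun _ : O => Set.Icc (0 : ℝ) 1) :=
    isCompact_univ_pi fun _ => isCompact_univ_pi fun _ => isCompact_Icc
  refine hbox.of_isClosed_subset ?_ fun μ hμ =>
    Set.mem_univ_pi.2 fun i => Set.mem_univ_pi.2 fun j => hμ.1 i j
  simp only [allocationPolytope, Set.ofPred_and, Set.ofPred_forall]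
  refine .inter (isClosed_iInter fun i => isClosed_iInter fun j => ?_)
    (.inter (isClosed_iInter fun i => ?_) (isClosed_iInter fun j => ?_))
  · exact isClosed_Icc.preimage (by fun_prop)
  · exact isClosed_eq (by fun_prop) continuous_const
  · exact isClosed_Icc.preimage (by fun_prop)

theorem eventually_add_smul_mem_allocationPolytope {μ δ : N → O → ℝ}
    (hμ : μ ∈ allocationPolytope N d m c) (hδ : ∀ i j, μ i j ∉ Set.Ioo 0 1 → δ i j = 0)
    (hrow : ∀ i, ∑ j, δ i j = 0)
    (hcol : ∀ j, ∑ i, μ i j ∉ Set.Ioo (m j : ℝ) (c j) → ∑ i, δ i j = 0) :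
    ∀ᶠ t in 𝓝 (0 : ℝ), μ + t • δ ∈ allocationPolytope N d m c := by
  obtain ⟨hμ01, hμrow, hμcol⟩ := hμ
  refine (eventually_all.2 fun i => eventually_all.2 fun j => ?_).and
    ((Eventually.of_forall fun t i => ?_).and (eventually_all.2 fun j => ?_))
  · refine eventually_add_mul_mem (hμ01 i j) fun hδij => ?_
    have h := not_imp_comm.mp (hδ i j) hδij
    exact Icc_mem_nhds h.1 h.2
  · simp only [Pi.add_apply, Pi.smul_apply, smul_eq_mul, sum_add_distrib, ← mul_sum, hμrow,
      hrow, mul_zero, add_zero]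
  · have hsum t : ∑ i, (μ + t • δ) i j = ∑ i, μ i j + t * ∑ i, δ i j := by
      simp [sum_add_distrib, mul_sum]
    simp only [hsum]
    refine eventually_add_mul_mem (hμcol j) fun hδj => ?_
    have h := not_imp_comm.mp (hcol j) hδj
    exact Icc_mem_nhds h.1 h.2

theorem eq_zero_or_eq_one_of_mem_extremePoints {μ : N → O → ℝ}
    (hμ : μ ∈ (allocationPolytope N d m c).extremePoints ℝ) : ∀ i j, μ i j = 0 ∨ μ i j = 1 := by
  intro i₀ j₀
  have hμR := extremePoints_subset hμ
  by_contra h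
  have h₀ : μ i₀ j₀ ∈ Set.Ioo 0 1 := by
    obtain ⟨h0, h1⟩ := not_or.mp h
    exact ⟨(hμR.1 i₀ j₀).1.lt_of_ne' h0, (hμR.1 i₀ j₀).2.lt_of_ne h1⟩
  have hT : ∀ j ∈ {j | ∑ i, μ i j ∉ Set.Ioo (m j : ℝ) (c j)}, ∃ n : ℤ, ∑ i, μ i j = n := by
    intro j hj
    obtain ⟨hm, hc⟩ := hμR.2.2 j
    rcases hm.eq_or_lt with h | h
    · exact ⟨m j, by simp [h]⟩
    · exact ⟨c j, by simpa using le_antisymm hc (not_lt.mp fun h' => hj ⟨h, h'⟩)⟩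
  obtain ⟨δ, hδ0, hδS, hδrow, hδcol⟩ := exists_ne_zero_supported_fractional_sums_eq_zero hμR.1
    (fun i => ⟨d, by simp [hμR.2.1 i]⟩) hT h₀
  obtain ⟨ε, hε, hadd, hsub⟩ := exists_pos_and_neg_of_eventually_nhds_zero
    (eventually_add_smul_mem_allocationPolytope hμR hδS hδrow hδcol)
  rw [neg_smul, ← sub_eq_add_neg] at hsub
  exact hδ0 ((smul_eq_zero.mp
    (eq_zero_of_add_mem_of_sub_mem_of_mem_extremePoints hμ hadd hsub)).resolve_left hε.ne')

end Allocation

theorem convexHull_allowable_eq_R_general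
    {N O : Type*} [Fintype N] [Fintype O]
    (d : ℕ) (m c : O → ℕ)
    (D : Set (N → O → ℝ))
    (hD : D = {M : N → O → ℝ | (∀ i j, M i j = 0 ∨ M i j = 1) ∧
      (∀ i, ∑ j, M i j = d) ∧
      (∀ j, (m j : ℝ) ≤ ∑ i, M i j ∧ ∑ i, M i j ≤ c j)}) :
    convexHull ℝ D =
      {μ : N → O → ℝ | (∀ i j, 0 ≤ μ i j ∧ μ i j ≤ 1) ∧
        (∀ i, ∑ j, μ i j = d) ∧
        (∀ j, (m j : ℝ) ≤ ∑ i, μ i j ∧ ∑ i, μ i j ≤ c j)} := by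
  change convexHull ℝ D = allocationPolytope N d m c
  have hDR : D ⊆ allocationPolytope N d m c := by
    rw [hD]
    rintro M ⟨hM01, hMR⟩
    refine ⟨fun i j => ?_, hMR⟩
    rcases hM01 i j with h | h <;> simp [h]
  have hD_finite : D.Finite := by
    refine (Set.Finite.pi fun _ => Set.Finite.pi fun _ => Set.toFinite {0, 1}).subset ?_
    rw [hD]
    exact fun M hM => Set.mem_univ_pi.2 fun i => Set.mem_univ_pi.2 fun j => hM.1 i j
  refine (convexHull_min hDR convex_allocationPolytope).antisymm ?_
  calc allocationPolytope N d m c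
      = closure (convexHull ℝ ((allocationPolytope N d m c).extremePoints ℝ)) :=
        (closure_convexHull_extremePoints isCompact_allocationPolytope
          convex_allocationPolytope).symm
    _ ⊆ closure (convexHull ℝ D) := closure_mono <| convexHull_mono fun μ hμ =>
        hD ▸ ⟨eq_zero_or_eq_one_of_mem_extremePoints hμ, (extremePoints_subset hμ).2⟩
    _ = convexHull ℝ D := (hD_finite.isCompact_convexHull ℝ).isClosed.closure_eq

/-- The convex hull of the set of allowable deterministic
allocations equals the polytope `R` given by demand equalities and
minimum/capacity constraints on the column marginals. -/
theorem convexHull_allowable_eq_R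
    {N O : Type*} [Fintype N] [Fintype O] [Nonempty N] [Nonempty O]
    (d : ℕ) (hd : 1 ≤ d) (m c : O → ℕ)
    (hc1 : ∀ j, 1 ≤ c j) (hc2 : ∀ j, c j ≤ Fintype.card N)
    (D : Set (N → O → ℝ))
    (hD : D = {M : N → O → ℝ | (∀ i j, M i j = 0 ∨ M i j = 1) ∧
      (∀ i, ∑ j, M i j = d) ∧
      (∀ j, (m j : ℝ) ≤ ∑ i, M i j ∧ ∑ i, M i j ≤ c j)}) :
    convexHull ℝ D =
      {μ : N → O → ℝ | (∀ i j, 0 ≤ μ i j ∧ μ i j ≤ 1) ∧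
        (∀ i, ∑ j, μ i j = d) ∧
        (∀ j, (m j : ℝ) ≤ ∑ i, μ i j ∧ ∑ i, μ i j ≤ c j)} :=
  convexHull_allowable_eq_R_general d m c D hD
end

section
/- Let O be a finite set, let (m_j)_{j∈O} and (μ_j)_{j∈O} be families of nonnegative real numbers, let Nr be a real number, and let O_m = {j ∈ O : m_j > 0}. Then the following are equivalent: (i) for every subset S ⊆ O_m, ∑_{j∈O∖S} μ_j ≤ Nr − ∑_{j∈S} m_j; (ii) ∑_{j∈O} max{m_j, μ_j} ≤ Nr. -/
namespace Finset

variable {ι M : Type*} [Fintype ι] [DecidableEq ι] [AddCommMonoid M] [LinearOrder M]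

theorem sum_add_sum_compl_le_sum_max [IsOrderedAddMonoid M] (S : Finset ι) (f g : ι → M) :
    ∑ j ∈ S, f j + ∑ j ∈ Sᶜ, g j ≤ ∑ j, max (f j) (g j) := by
  rw [← sum_add_sum_compl S fun j => max (f j) (g j)]
  exact add_le_add (sum_le_sum fun j _ => le_max_left _ _)
    (sum_le_sum fun j _ => le_max_right _ _)

theorem sum_max_eq_sum_filter_lt_add_sum_compl (f g : ι → M) :
    ∑ j, max (f j) (g j) =
      ∑ j ∈ univ.filter (fun j => g j < f j), f j +
        ∑ j ∈ (univ.filter fun j => g j < f j)ᶜ, g j := by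
  rw [← sum_add_sum_compl (univ.filter fun j => g j < f j)]
  congr 1
  · exact sum_congr rfl fun j hj => max_eq_left (mem_filter.mp hj).2.le
  · refine sum_congr rfl fun j hj => max_eq_right ?_
    simpa only [mem_compl, mem_filter, mem_univ, true_and, not_lt] using hj

end Finset

theorem MinIII_iff_MinIV_general
    {O : Type*} [Fintype O] [DecidableEq O]
    (m μ : O → ℝ) (hμ : ∀ j, 0 ≤ μ j) (Nr : ℝ) :
    (∀ S : Finset O, (∀ j ∈ S, 0 < m j) →
        ∑ j ∈ Sᶜ, μ j ≤ Nr - ∑ j ∈ S, m j) ↔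
      ∑ j, max (m j) (μ j) ≤ Nr := by
  constructor
  · intro h
    -- The sum of maxima is the value at `S = {j | μ j < m j}`, which lies in `O_m` since `μ ≥ 0`.
    have hS : ∀ j ∈ Finset.univ.filter (fun j => μ j < m j), 0 < m j := fun j hj =>
      (hμ j).trans_lt (Finset.mem_filter.mp hj).2
    have hbound := h _ hS
    rw [Finset.sum_max_eq_sum_filter_lt_add_sum_compl]
    linarith
  · intro h S _
    have hsplit := Finset.sum_add_sum_compl_le_sum_max S m μ
    linarith

/-- For nonnegative families `m` and `μ` over a finite index set,
the family of inequalities `∑_{j ∉ S} μ_j ≤ Nr − ∑_{j ∈ S} m_j` for all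
`S ⊆ O_m = {j : m_j > 0}` is equivalent to the single inequality
`∑_j max{m_j, μ_j} ≤ Nr`. -/
theorem MinIII_iff_MinIV
    {O : Type*} [Fintype O] [DecidableEq O]
    (m μ : O → ℝ) (hm : ∀ j, 0 ≤ m j) (hμ : ∀ j, 0 ≤ μ j) (Nr : ℝ) :
    (∀ S : Finset O, (∀ j ∈ S, 0 < m j) →
        ∑ j ∈ Sᶜ, μ j ≤ Nr - ∑ j ∈ S, m j) ↔
      ∑ j, max (m j) (μ j) ≤ Nr :=
  MinIII_iff_MinIV_general m μ hμ Nr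
end

section
/- Let N and O be finite nonempty sets, and for each j ∈ O let m_j and c_j be integers with 0 ≤ m_j and c_j ≥ 1; assume ∑_{j∈O} c_j ≥ |N| and let O_m = {j ∈ O : m_j > 0}. Let μ ∈ [0,1]^{N×O} and write μ_j = ∑_{i∈N} μ_{ij}. Then the following are equivalent: (A) for every S ⊆ O and every T ⊆ N, ∑_{i∈N∖T, j∈S} μ_{ij} ≤ |T|·(|O∖S| − 1) + ∑_{j∈S} c_j, and for every S ⊆ O_m and every T ⊆ N, ∑_{i∈T, j∈O∖S} μ_{ij} ≤ |T| + |N∖T|·|S| − ∑_{j∈S} m_j; (B) ∑_{j∈O} μ_{ij} ≤ 1 for every i ∈ N, μ_j ≤ c_j for every j ∈ O, and ∑_{j∈O∖S} μ_j ≤ |N| − ∑_{j∈S} m_j for every S ⊆ O_m. -/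
/-- For unit demand, the Hoffman-type family (A) of inequalities
is equivalent to the simpler system (B): relaxed unit demand, capacities, and
the (Min-III) inequalities. -/
theorem unit_demand_inequalities_equiv
    {N O : Type*} [Fintype N] [Fintype O] [DecidableEq N] [DecidableEq O]
    [Nonempty N] [Nonempty O]
    (m c : O → ℤ) (hm : ∀ j, 0 ≤ m j) (hc : ∀ j, 1 ≤ c j)
    (hfeasc : (Fintype.card N : ℤ) ≤ ∑ j, c j)
    (μ : N → O → ℝ) (hμ : ∀ i j, 0 ≤ μ i j ∧ μ i j ≤ 1) :
    ((∀ (S : Finset O) (T : Finset N),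
        ∑ i ∈ Tᶜ, ∑ j ∈ S, μ i j ≤
          (T.card : ℝ) * ((Sᶜ.card : ℝ) - 1) + ∑ j ∈ S, (c j : ℝ)) ∧
      (∀ S : Finset O, (∀ j ∈ S, 0 < m j) → ∀ T : Finset N,
        ∑ i ∈ T, ∑ j ∈ Sᶜ, μ i j ≤
          (T.card : ℝ) + (Tᶜ.card : ℝ) * S.card - ∑ j ∈ S, (m j : ℝ))) ↔
    ((∀ i, ∑ j, μ i j ≤ 1) ∧
      (∀ j, ∑ i, μ i j ≤ (c j : ℝ)) ∧
      (∀ S : Finset O, (∀ j ∈ S, 0 < m j) →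
        ∑ j ∈ Sᶜ, ∑ i, μ i j ≤ (Fintype.card N : ℝ) - ∑ j ∈ S, (m j : ℝ))) := by
  have hμ0 : ∀ i j, 0 ≤ μ i j := fun i j => (hμ i j).1
  constructor
  · rintro ⟨hA1, hA2⟩
    refine ⟨?_, ?_, ?_⟩
    · intro i
      have := hA2 ∅ (by simp) {i}
      simpa using this
    · intro j
      have := hA1 {j} ∅
      simpa using this
    · intro S hS
      have := hA2 S hS Finset.univ
      rw [Finset.sum_comm]
      simpa using this
  · rintro ⟨hB1, hB2, hB3⟩
    have hcard : ∀ T : Finset N, (T.card : ℝ) + (Tᶜ.card : ℝ) = Fintype.card N := by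
      intro T
      exact_mod_cast T.card_add_card_compl
    constructor
    · intro S T
      by_cases hS : S = Finset.univ
      · subst hS
        have h1 : ∑ i ∈ Tᶜ, ∑ j, μ i j ≤ (Tᶜ.card : ℝ) := by
          calc ∑ i ∈ Tᶜ, ∑ j, μ i j ≤ ∑ _i ∈ Tᶜ, (1 : ℝ) :=
                Finset.sum_le_sum fun i _ => hB1 i
            _ = (Tᶜ.card : ℝ) := by simp
        have hf : (Fintype.card N : ℝ) ≤ ∑ j, (c j : ℝ) := by exact_mod_cast hfeasc
        have hcompl : ((Finset.univ : Finset O)ᶜ.card : ℝ) = 0 := by simp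
        rw [hcompl]
        have := hcard T
        linarith
      · have hne : (Sᶜ : Finset O).Nonempty := by rw [Finset.nonempty_iff_ne_empty]; simpa [Finset.compl_eq_empty_iff] using hS
        have h1 : (1 : ℝ) ≤ (Sᶜ.card : ℝ) := by exact_mod_cast hne.card_pos
        have h2 : ∑ i ∈ Tᶜ, ∑ j ∈ S, μ i j ≤ ∑ j ∈ S, (c j : ℝ) := by
          rw [Finset.sum_comm]
          refine Finset.sum_le_sum fun j _ => ?_
          calc ∑ i ∈ Tᶜ, μ i j ≤ ∑ i, μ i j :=
                Finset.sum_le_sum_of_subset_of_nonneg (Finset.subset_univ _)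
                  (fun i _ _ => hμ0 i j)
            _ ≤ (c j : ℝ) := hB2 j
        have h3 : (0 : ℝ) ≤ (T.card : ℝ) * ((Sᶜ.card : ℝ) - 1) :=
          mul_nonneg (by positivity) (by linarith)
        linarith
    · intro S hS T
      by_cases hSe : S = ∅
      · subst hSe
        simp only [Finset.compl_empty, Finset.sum_empty, Finset.card_empty,
          Nat.cast_zero, mul_zero, sub_zero, add_zero]
        calc ∑ i ∈ T, ∑ j, μ i j ≤ ∑ _i ∈ T, (1 : ℝ) :=
              Finset.sum_le_sum fun i _ => hB1 i
          _ = (T.card : ℝ) := by simp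
      · have hne : S.Nonempty := Finset.nonempty_iff_ne_empty.mpr hSe
        have hS1 : (1 : ℝ) ≤ (S.card : ℝ) := by exact_mod_cast hne.card_pos
        have h3 : ∑ i ∈ T, ∑ j ∈ Sᶜ, μ i j ≤
            (Fintype.card N : ℝ) - ∑ j ∈ S, (m j : ℝ) := by
          calc ∑ i ∈ T, ∑ j ∈ Sᶜ, μ i j ≤ ∑ i, ∑ j ∈ Sᶜ, μ i j :=
                Finset.sum_le_sum_of_subset_of_nonneg (Finset.subset_univ _)
                  (fun i _ _ => Finset.sum_nonneg fun j _ => hμ0 i j)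
            _ = ∑ j ∈ Sᶜ, ∑ i, μ i j := Finset.sum_comm
            _ ≤ (Fintype.card N : ℝ) - ∑ j ∈ S, (m j : ℝ) := hB3 S hS
        have h4 : (Tᶜ.card : ℝ) * 1 ≤ (Tᶜ.card : ℝ) * (S.card : ℝ) :=
          mul_le_mul_of_nonneg_left hS1 (by positivity)
        have := hcard T
        linarith
end

section
/- Let N = {1,2,3} and O = {o_1,o_2,o_3}, with capacities c_j = 3 for all j ∈ O and minimums m_1 = 1, m_2 = 1, m_3 = 0, and let D be the set of matrices M ∈ {0,1}^{N×O} such that ∑_{j∈O} M_{ij} = 1 for every i ∈ N and m_j ≤ ∑_{i∈N} M_{ij} ≤ c_j for every j ∈ O. Then there is no bihierarchy ℋ of subsets of N×O containing every row set {i}×O, together with natural-number ceilings q̄_S for the non-row sets S ∈ ℋ, such that for every M ∈ {0,1}^{N×O}: M ∈ D if and only if [∑_{j∈O} M_{ij} = 1 for every i ∈ N, and ∑_{(i,j)∈S} M_{ij} ≤ q̄_S for every S ∈ ℋ that is not of the form {i}×O]. -/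
/-- A row set is the set of all pairs with a fixed agent in the first
coordinate. -/
def IsRowSet (S : Finset (Fin 3 × Fin 3)) : Prop :=
  ∃ i : Fin 3, S = {i} ×ˢ Finset.univ

/-- A hierarchy: any two constraint sets are nested or disjoint. -/
def IsHierarchy (H : Set (Finset (Fin 3 × Fin 3))) : Prop :=
  ∀ S ∈ H, ∀ S' ∈ H, S ⊆ S' ∨ S' ⊆ S ∨ S ∩ S' = ∅

/-- A bihierarchy: the disjoint union of two hierarchies. -/
def IsBihierarchy (H : Set (Finset (Fin 3 × Fin 3))) : Prop :=
  ∃ H₁ H₂ : Set (Finset (Fin 3 × Fin 3)),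
    IsHierarchy H₁ ∧ IsHierarchy H₂ ∧ H = H₁ ∪ H₂ ∧ H₁ ∩ H₂ = ∅

/-- The twelve allowable deterministic allocations. -/
def gmats : List (Fin 3 → Fin 3 → ℕ) :=
  [![![1,0,0],![1,0,0],![0,1,0]],
  ![![1,0,0],![0,1,0],![1,0,0]],
  ![![1,0,0],![0,1,0],![0,1,0]],
  ![![1,0,0],![0,1,0],![0,0,1]],
  ![![1,0,0],![0,0,1],![0,1,0]],
  ![![0,1,0],![1,0,0],![1,0,0]],
  ![![0,1,0],![1,0,0],![0,1,0]],
  ![![0,1,0],![1,0,0],![0,0,1]],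
  ![![0,1,0],![0,1,0],![1,0,0]],
  ![![0,1,0],![0,0,1],![1,0,0]],
  ![![0,0,1],![1,0,0],![0,1,0]],
  ![![0,0,1],![0,1,0],![1,0,0]]]

/-- Bad matrix B : agents 1,2 take object 1, agent 3 takes object 3. -/
def Bmat : Fin 3 → Fin 3 → ℕ := ![![1,0,0],![1,0,0],![0,0,1]]

/-- Bad matrix C : agents 1,2 take object 2, agent 3 takes object 3. -/
def Cmat : Fin 3 → Fin 3 → ℕ := ![![0,1,0],![0,1,0],![0,0,1]]

set_option maxRecDepth 100000 in
lemma keyB : ∀ S : Finset (Fin 3 × Fin 3),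
    (∀ M ∈ gmats, ∑ p ∈ S, M p.1 p.2 < ∑ p ∈ S, Bmat p.1 p.2) →
    ((0,0) ∈ S ∧ (1,0) ∈ S ∧ (2,2) ∈ S ∧ (0,1) ∉ S) := by decide

set_option maxRecDepth 100000 in
lemma keyC : ∀ S : Finset (Fin 3 × Fin 3),
    (∀ M ∈ gmats, ∑ p ∈ S, M p.1 p.2 < ∑ p ∈ S, Cmat p.1 p.2) →
    ((0,1) ∈ S ∧ (1,1) ∈ S ∧ (2,2) ∈ S ∧ (0,0) ∉ S) := by decide

/-- For the 3×3 market with capacities 3 and minimums (1,1,0),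
the set of allowable deterministic allocations cannot be described by a
bihierarchical constraint structure containing all row sets with
unit-demand equalities on rows and only ceilings on non-row constraint
sets. -/
theorem no_bihierarchy_ceiling_representation
    (m : Fin 3 → ℕ) (hm : m = ![1, 1, 0])
    (c : Fin 3 → ℕ) (hc : c = ![3, 3, 3])
    (D : Set (Fin 3 → Fin 3 → ℕ))
    (hD : D = {M : Fin 3 → Fin 3 → ℕ | (∀ i j, M i j = 0 ∨ M i j = 1) ∧
      (∀ i, ∑ j, M i j = 1) ∧
      (∀ j, m j ≤ ∑ i, M i j ∧ ∑ i, M i j ≤ c j)}) :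
    ¬ ∃ (H : Set (Finset (Fin 3 × Fin 3))) (q : Finset (Fin 3 × Fin 3) → ℕ),
      IsBihierarchy H ∧
      (∀ i : Fin 3, ({i} ×ˢ (Finset.univ : Finset (Fin 3))) ∈ H) ∧
      ∀ M : Fin 3 → Fin 3 → ℕ, (∀ i j, M i j = 0 ∨ M i j = 1) →
        (M ∈ D ↔ ((∀ i, ∑ j, M i j = 1) ∧
          ∀ S ∈ H, ¬ IsRowSet S → ∑ p ∈ S, M p.1 p.2 ≤ q S)) := by
  subst hm hc hD
  rintro ⟨H, q, ⟨H₁, H₂, hH₁, hH₂, hun, -⟩, hrows, hiff⟩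
  -- the twelve good matrices belong to D
  have hgood : ∀ M ∈ gmats,
      M ∈ {M : Fin 3 → Fin 3 → ℕ | (∀ i j, M i j = 0 ∨ M i j = 1) ∧
        (∀ i, ∑ j, M i j = 1) ∧
        (∀ j, (![1,1,0] : Fin 3 → ℕ) j ≤ ∑ i, M i j ∧
          ∑ i, M i j ≤ (![3,3,3] : Fin 3 → ℕ) j)} := by
    intro M hM
    simp only [Set.mem_setOf_eq]
    fin_cases hM <;> refine ⟨by decide, by decide, by decide⟩
  -- ceilings satisfied by good matrices
  have hceil : ∀ S ∈ H, ¬ IsRowSet S → ∀ M ∈ gmats,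
      ∑ p ∈ S, M p.1 p.2 ≤ q S := by
    intro S hS hnr M hM
    have hb : ∀ i j, M i j = 0 ∨ M i j = 1 := (hgood M hM).1
    exact ((hiff M hb).mp (hgood M hM)).2 S hS hnr
  -- extract a violated ceiling set for a bad matrix
  have extract : ∀ Bad : Fin 3 → Fin 3 → ℕ, (∀ i j, Bad i j = 0 ∨ Bad i j = 1) →
      (∀ i, ∑ j, Bad i j = 1) →
      Bad ∉ {M : Fin 3 → Fin 3 → ℕ | (∀ i j, M i j = 0 ∨ M i j = 1) ∧
        (∀ i, ∑ j, M i j = 1) ∧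
        (∀ j, (![1,1,0] : Fin 3 → ℕ) j ≤ ∑ i, M i j ∧
          ∑ i, M i j ≤ (![3,3,3] : Fin 3 → ℕ) j)} →
      ∃ S ∈ H, ¬ IsRowSet S ∧
        ∀ M ∈ gmats, ∑ p ∈ S, M p.1 p.2 < ∑ p ∈ S, Bad p.1 p.2 := by
    intro Bad hb hr hnot
    have h1 : ¬ ((∀ i, ∑ j, Bad i j = 1) ∧
        ∀ S ∈ H, ¬ IsRowSet S → ∑ p ∈ S, Bad p.1 p.2 ≤ q S) :=
      fun h => hnot ((hiff Bad hb).mpr h)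
    push_neg at h1
    obtain ⟨S, hS, hnr, hq⟩ := h1 hr
    exact ⟨S, hS, hnr, fun M hM =>
      lt_of_le_of_lt (hceil S hS hnr M hM) hq⟩
  -- the two bad matrices
  obtain ⟨S, hSH, hSnr, hSlt⟩ := extract Bmat (by decide) (by decide)
    (by intro h; have := (h.2.2 1).1; simp only [Bmat] at this; revert this; decide)
  obtain ⟨T, hTH, hTnr, hTlt⟩ := extract Cmat (by decide) (by decide)
    (by intro h; have := (h.2.2 0).1; simp only [Cmat] at this; revert this; decide)
  obtain ⟨hS00, hS10, hS22, hS01⟩ := keyB S hSlt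
  obtain ⟨hT01, hT11, hT22, hT00⟩ := keyC T hTlt
  -- row 0
  set R : Finset (Fin 3 × Fin 3) := {(0 : Fin 3)} ×ˢ Finset.univ with hR
  have hRH : R ∈ H := hrows 0
  have hR00 : (0,0) ∈ R := by decide
  have hR01 : (0,1) ∈ R := by decide
  have hR10 : (1,0) ∉ R := by decide
  have hR11 : (1,1) ∉ R := by decide
  -- conflicts
  have cSR : ¬ (S ⊆ R ∨ R ⊆ S ∨ S ∩ R = ∅) := by
    rintro (h | h | h)
    · exact hR10 (h hS10)
    · exact hS01 (h hR01)
    · have : (0,0) ∈ S ∩ R := Finset.mem_inter.mpr ⟨hS00, hR00⟩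
      simp [h] at this
  have cTR : ¬ (T ⊆ R ∨ R ⊆ T ∨ T ∩ R = ∅) := by
    rintro (h | h | h)
    · exact hR11 (h hT11)
    · exact hT00 (h hR00)
    · have : (0,1) ∈ T ∩ R := Finset.mem_inter.mpr ⟨hT01, hR01⟩
      simp [h] at this
  have cST : ¬ (S ⊆ T ∨ T ⊆ S ∨ S ∩ T = ∅) := by
    rintro (h | h | h)
    · exact hT00 (h hS00)
    · exact hS01 (h hT01)
    · have : (2,2) ∈ S ∩ T := Finset.mem_inter.mpr ⟨hS22, hT22⟩
      simp [h] at this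
  rw [hun] at hSH hTH hRH
  rcases hSH with hS1 | hS2 <;> rcases hTH with hT1 | hT2 <;>
    rcases hRH with hR1 | hR2
  · exact cSR (hH₁ S hS1 R hR1)
  · exact cST (hH₁ S hS1 T hT1)
  · exact cSR (hH₁ S hS1 R hR1)
  · exact cTR (hH₂ T hT2 R hR2)
  · exact cTR (hH₁ T hT1 R hR1)
  · exact cSR (hH₂ S hS2 R hR2)
  · exact cST (hH₂ S hS2 T hT2)
  · exact cST (hH₂ S hS2 T hT2)
end

section
/- Fix a market with unit demand d = 1, a strict preference profile ≻, and an MPS eating profile e for ≻, with final allocation μ. Then MPS is envy free: for all agents i, i' ∈ N, the row μ_i = (μ_{ij})_{j∈O} first-order stochastically dominates the row μ_{i'} = (μ_{i'j})_{j∈O} for ≻_i. -/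
open MeasureTheory Finset
open scoped Classical

/-- The amount of probability of objects in `S` consumed up to time `t`
under the eating profile `e`:  `μ_S(t,e) = ∫_0^t |{i : e_i(s) ∈ S}| ds`. -/
noncomputable def eatenAmt {N O : Type*} [Fintype N]
    (e : N → ℝ → O) (S : Set O) (t : ℝ) : ℝ :=
  ∫ s in (0:ℝ)..t, ((Finset.univ.filter (fun i => e i s ∈ S)).card : ℝ)

/-- The final allocation of the eating profile `e`:
`μ_{ij} = ∫_0^1 1{e_i(s) = j} ds`. -/
noncomputable def finalAlloc {N O : Type*} (e : N → ℝ → O) (i : N) (j : O) : ℝ :=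
  ∫ s in (0:ℝ)..1, (if e i s = j then (1:ℝ) else 0)

/-- `f` is a right-continuous step function on `[0,1)`: there is a finite set
of breakpoints, and `f` is constant on the stretches between them. -/
def RightContStep {O : Type*} (f : ℝ → O) : Prop :=
  ∃ B : Finset ℝ, ∀ t ∈ Set.Ico (0:ℝ) 1, ∀ s ∈ Set.Ico (0:ℝ) 1,
    t ≤ s → (∀ b ∈ B, ¬ (t < b ∧ b ≤ s)) → f s = f t

/-- Object `j` satisfies the capacity condition (Cap) at `(t,e)`. -/
def CapOK {N O : Type*} [Fintype N] (c : O → ℕ)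
    (e : N → ℝ → O) (j : O) (t : ℝ) : Prop :=
  eatenAmt e {j} t < c j

/-- Object `j` satisfies the global minimums condition (Global) at `(t,e)`. -/
def GlobalOK {N O : Type*} [Fintype N] [Fintype O] (m : O → ℕ)
    (e : N → ℝ → O) (j : O) (t : ℝ) : Prop :=
  ∃ ε > 0, max (m j : ℝ) (eatenAmt e {j} t + ε) +
      ∑ k ∈ Finset.univ.erase j, max (m k : ℝ) (eatenAmt e {k} t) ≤
    (Fintype.card N : ℝ)

/-- Object `j` is available at `(t,e)`. -/
def Available {N O : Type*} [Fintype N] [Fintype O] (m c : O → ℕ)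
    (e : N → ℝ → O) (j : O) (t : ℝ) : Prop :=
  CapOK c e j t ∧ GlobalOK m e j t

/-- `e` is an MPS eating profile for the strict preference profile `P`:
each `e_i` is a right-continuous step function and, at every time
`t ∈ [0,1)`, `e_i(t)` is available and is `i`'s most preferred object among
the available ones. -/
def IsMPS {N O : Type*} [Fintype N] [Fintype O] (m c : O → ℕ)
    (P : N → O → O → Prop) (e : N → ℝ → O) : Prop :=
  (∀ i, RightContStep (e i)) ∧
  ∀ i, ∀ t ∈ Set.Ico (0:ℝ) 1,
    Available m c e (e i t) t ∧
    ∀ j, Available m c e j t → j ≠ e i t → P i (e i t) j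

/-- The closing time `t_j` of object `j` under `e` (with `inf ∅ = 1`). -/
noncomputable def closeTime {N O : Type*} [Fintype N] [Fintype O] (m c : O → ℕ)
    (e : N → ℝ → O) (j : O) : ℝ :=
  sInf ({t ∈ Set.Icc (0:ℝ) 1 | ¬ Available m c e j t} ∪ {1})

/-- The time `τ` at which the global minimums condition starts binding
under `e` (with `inf ∅ = 1`). -/
noncomputable def globalTime {N O : Type*} [Fintype N] [Fintype O] (m : O → ℕ)
    (e : N → ℝ → O) : ℝ :=
  sInf ({t ∈ Set.Icc (0:ℝ) 1 | ∃ j : O, ¬ GlobalOK m e j t} ∪ {1})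

/-- `x` first-order stochastically dominates `y` for the strict preference
`Pi`. -/
def FOSD {O : Type*} [Fintype O] (Pi : O → O → Prop) (x y : O → ℝ) : Prop :=
  ∀ o : O, ∑ j ∈ Finset.univ.filter (fun j => Pi j o ∨ j = o), y j ≤
    ∑ j ∈ Finset.univ.filter (fun j => Pi j o ∨ j = o), x j

/-!
At every time `s ∈ [0,1)` the object agent `i'` eats is available, and agent `i` eats her
favourite available object; so whenever `i'` eats from `i`'s weak upper contour set of `o`,
so does `i`. Integrating this pointwise domination of indicators over `[0,1)` gives first-order
stochastic dominance. The integrals make sense because on `[0,1)` a step function factors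
through the monotone, finitely-valued map sending `s` to the last breakpoint before it.
-/

noncomputable def lastBreak (B : Finset ℝ) (s : ℝ) : ℝ :=
  (insert 0 (B.filter (· ≤ s))).max' (insert_nonempty _ _)

lemma lastBreak_mem (B : Finset ℝ) (s : ℝ) : lastBreak B s ∈ insert 0 B := by
  have := (insert 0 (B.filter (· ≤ s))).max'_mem (insert_nonempty _ _)
  rw [mem_insert, mem_filter] at this
  exact mem_insert.2 (this.imp_right And.left)

lemma monotone_lastBreak (B : Finset ℝ) : Monotone (lastBreak B) := fun _ _ hst =>
  max'_subset _ (insert_subset_insert _ (monotone_filter_right _ fun _ _ h => h.trans hst))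

lemma apply_eq_apply_lastBreak {O : Type*} {f : ℝ → O} {B : Finset ℝ}
    (hB : ∀ t ∈ Set.Ico (0:ℝ) 1, ∀ s ∈ Set.Ico (0:ℝ) 1,
      t ≤ s → (∀ b ∈ B, ¬ (t < b ∧ b ≤ s)) → f s = f t)
    {s : ℝ} (hs : s ∈ Set.Ico (0:ℝ) 1) : f s = f (lastBreak B s) := by
  have hle : ∀ b ∈ insert 0 (B.filter (· ≤ s)), b ≤ lastBreak B s := fun b hb =>
    le_max' _ b hb
  have hts : lastBreak B s ≤ s := by
    rcases mem_insert.1 ((insert 0 (B.filter (· ≤ s))).max'_mem (insert_nonempty _ _))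
      with h | h
    · exact h.trans_le hs.1
    · exact (mem_filter.1 h).2
  refine hB _ ⟨hle 0 (mem_insert_self _ _), hts.trans_lt hs.2⟩ s hs hts
    fun b hb ⟨hlt, hbs⟩ => ?_
  exact (hle b (mem_insert_of_mem (mem_filter.2 ⟨hb, hbs⟩))).not_gt hlt

lemma RightContStep.intervalIntegrable_ite {O : Type*} {f : ℝ → O} (hf : RightContStep f)
    (p : O → Prop) [DecidablePred p] :
    IntervalIntegrable (fun s => if p (f s) then (1:ℝ) else 0) volume 0 1 := by
  obtain ⟨B, hB⟩ := hf
  set T := lastBreak B ⁻¹' ({t | p (f t)} ∩ ↑(insert 0 B))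
  have hT : MeasurableSet T := (monotone_lastBreak B).measurable
    ((insert 0 B).finite_toSet.subset Set.inter_subset_right).measurableSet
  rw [intervalIntegrable_iff_integrableOn_Ioo_of_le zero_le_one]
  refine ((integrableOn_const (C := (1:ℝ)) (by simp)).indicator hT).congr_fun (fun s hs => ?_)
    measurableSet_Ioo
  rw [apply_eq_apply_lastBreak hB (Set.Ioo_subset_Ico_self hs)]
  simp [T, Set.indicator, mem_insert.1 (lastBreak_mem B s)]

lemma sum_finalAlloc_eq_integral {N O : Type*} {e : N → ℝ → O} {a : N}
    (he : RightContStep (e a)) (U : Finset O) :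
    ∑ j ∈ U, finalAlloc e a j = ∫ s in (0:ℝ)..1, if e a s ∈ U then (1:ℝ) else 0 := by
  unfold finalAlloc
  rw [← intervalIntegral.integral_finsetSum fun j _ => he.intervalIntegrable_ite (· = j)]
  congr 1 with s
  exact sum_ite_eq U (e a s) fun _ => (1:ℝ)

lemma IsMPS.eq_or_prefers {N O : Type*} [Fintype N] [Fintype O] {m c : O → ℕ}
    {P : N → O → O → Prop} {e : N → ℝ → O} (he : IsMPS m c P e) (i i' : N) {t : ℝ}
    (ht : t ∈ Set.Ico (0:ℝ) 1) : e i' t = e i t ∨ P i (e i t) (e i' t) := by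
  by_cases h : e i' t = e i t
  · exact .inl h
  · exact .inr ((he.2 i t ht).2 _ (he.2 i' t ht).1 h)

theorem MPS_envy_free_general
    {N O : Type*} [Fintype N] [Fintype O]
    (m c : O → ℕ)
    (P : N → O → O → Prop) (hP : ∀ i, IsStrictTotalOrder O (P i))
    (e : N → ℝ → O) (he : IsMPS m c P e) :
    ∀ i i' : N, FOSD (P i) (finalAlloc e i) (finalAlloc e i') := by
  intro i i' o
  set U := univ.filter fun j => P i j o ∨ j = o
  have hdom : ∀ s ∈ Set.Ioo (0:ℝ) 1,
      (if e i' s ∈ U then (1:ℝ) else 0) ≤ if e i s ∈ U then (1:ℝ) else 0 := by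
    intro s hs
    have hU : e i' s ∈ U → e i s ∈ U := by
      simp only [U, mem_filter, mem_univ, true_and]
      rcases he.eq_or_prefers i i' (Set.Ioo_subset_Ico_self hs) with h | h
      · exact h ▸ id
      · exact fun ho => .inl (ho.elim (_root_.trans h) (· ▸ h))
    split_ifs <;> simp_all
  rw [sum_finalAlloc_eq_integral (he.1 i) U, sum_finalAlloc_eq_integral (he.1 i') U]
  exact intervalIntegral.integral_mono_on_of_le_Ioo zero_le_one
    ((he.1 i').intervalIntegrable_ite (· ∈ U)) ((he.1 i).intervalIntegrable_ite (· ∈ U)) hdom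

/-- MPS (unit demand) is envy free: under an MPS eating profile,
every agent's final lottery first-order stochastically dominates every other
agent's final lottery with respect to his own preferences. -/
theorem MPS_envy_free
    {N O : Type*} [Fintype N] [Fintype O] [Nonempty N] [Nonempty O]
    (m c : O → ℕ)
    (hc1 : ∀ j, 1 ≤ c j) (hc2 : ∀ j, c j ≤ Fintype.card N)
    (hfeasc : Fintype.card N ≤ ∑ j, c j)
    (hfeasm : ∑ j, m j ≤ Fintype.card N)
    (P : N → O → O → Prop) (hP : ∀ i, IsStrictTotalOrder O (P i))
    (e : N → ℝ → O) (he : IsMPS m c P e) :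
    ∀ i i' : N, FOSD (P i) (finalAlloc e i) (finalAlloc e i') :=
  MPS_envy_free_general m c P hP e he
end

section
/- Fix a market with unit demand d = 1, a truthful preference profile ≻, a distinguished agent 1 with ≻_1-most-preferred object a and misreport ≻'_1, an MPS eating profile e for ≻ and an MPS eating profile e' for ≻' = (≻'_1, (≻_i)_{i≠1}). Suppose t_a ≥ τ and τ' ≥ τ. Then for every object b ∈ O with b ≠ a, μ_b(τ, e') ≥ μ_b(τ, e). -/
open MeasureTheory Finset
open scoped Classical

/-!
Before `τ` the global-minimum condition binds in neither run, so availability is governed by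
the capacities alone, and agent `i₀` eats `a` throughout `[0, τ)` under `e`. Between consecutive
breakpoints of the two step profiles every consumed amount grows linearly, so it suffices to
propagate `μ_b(·, e) ≤ μ_b(·, e')` across one such stretch `[p, t]`. If `b` is already full
under `e'` at `p`, then `μ_b(t, e) ≤ c_b ≤ μ_b(t, e')`. Otherwise every agent eating `b` under
`e` at `p` is some `i ≠ i₀` with unchanged preferences, and the object it eats under `e'` is
still available under `e` (by the inequality at `p`), so it also eats `b` under `e'`: the
consumption rate of `b` under `e'` is at least that under `e`.
-/

open Set Filter Topology

section StepFunctions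

variable {O : Type*}

/-- `RightContStep f` unfolds to `∃ B, StepBreaks B f`. -/
def StepBreaks (B : Finset ℝ) (f : ℝ → O) : Prop :=
  ∀ t ∈ Ico (0:ℝ) 1, ∀ s ∈ Ico (0:ℝ) 1, t ≤ s → (∀ b ∈ B, ¬ (t < b ∧ b ≤ s)) → f s = f t

lemma StepBreaks.mono {B B' : Finset ℝ} {f : ℝ → O} (h : StepBreaks B f) (hBB' : B ⊆ B') :
    StepBreaks B' f :=
  fun t ht s hs hts hB => h t ht s hs hts fun b hb => hB b (hBB' hb)

lemma exists_stepBreaks {ι : Type*} [Fintype ι] {f : ι → ℝ → O}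
    (hf : ∀ i, RightContStep (f i)) : ∃ B : Finset ℝ, ∀ i, StepBreaks B (f i) := by
  choose B hB using hf
  exact ⟨Finset.univ.biUnion B, fun i =>
    StepBreaks.mono (hB i) (Finset.subset_biUnion_of_mem B (Finset.mem_univ i))⟩

lemma StepBreaks.eq_of_mem_Ico {B : Finset ℝ} {f : ℝ → O} (h : StepBreaks B f) {p t s : ℝ}
    (hp : 0 ≤ p) (ht : t ≤ 1) (hB : ∀ b ∈ B, b ∉ Ioo p t) (hs : s ∈ Ico p t) : f s = f p :=
  h p ⟨hp, hs.1.trans_lt (hs.2.trans_le ht)⟩ s ⟨hp.trans hs.1, hs.2.trans_le ht⟩ hs.1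
    fun b hb hbs => hB b hb ⟨hbs.1, hbs.2.trans_lt hs.2⟩

end StepFunctions

theorem forall_mem_Icc_of_stretch_step (B : Finset ℝ) {Q : ℝ → Prop} {a : ℝ} (ha : Q a) :
    ∀ T, (∀ p t, a ≤ p → p ≤ t → t ≤ T → (∀ x ∈ B, x ∉ Ioo p t) → Q p → Q t) →
      ∀ t ∈ Icc a T, Q t := by
  induction B using Finset.induction_on_max with
  | empty => exact fun T step t ht => step a t le_rfl ht.1 ht.2 (by simp) ha
  | insert x B hlt ih =>
    intro T step
    by_cases hxa : x < a
    · exact ih T fun p t hap hpt htT hB => step p t hap hpt htT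
        ((forall_mem_insert _ _ _).2 ⟨fun hx => (hxa.trans_le hap).not_gt hx.1, hB⟩)
    have below : ∀ t ∈ Icc a (min x T), Q t :=
      ih (min x T) fun p t hap hpt htT hB => step p t hap hpt (htT.trans (min_le_right _ _))
        ((forall_mem_insert _ _ _).2 ⟨fun hx => hx.2.not_ge (htT.trans (min_le_left _ _)), hB⟩)
    intro t ht
    rcases le_or_gt t x with htx | hxt
    · exact below t ⟨ht.1, le_min htx ht.2⟩
    · exact step x t (not_lt.1 hxa) hxt.le ht.2
        ((forall_mem_insert _ _ _).2
          ⟨fun hx => lt_irrefl x hx.1, fun y hy hyI => (hlt y hy).not_gt hyI.1⟩)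
        (below x ⟨not_lt.1 hxa, le_min le_rfl (hxt.le.trans ht.2)⟩)

section ConstantOnIco

variable {F : ℝ → ℝ} {p t c : ℝ}

lemma intervalIntegrable_of_eqOn_Ico (hpt : p ≤ t) (hF : EqOn F (fun _ => c) (Ico p t)) :
    IntervalIntegrable F volume p t := by
  rw [intervalIntegrable_iff_integrableOn_Ioc_of_le hpt, integrableOn_Ioc_iff_integrableOn_Ioo,
    ← integrableOn_Ico_iff_integrableOn_Ioo]
  exact (integrableOn_const measure_Ico_lt_top.ne).congr_fun hF.symm measurableSet_Ico

lemma integral_of_eqOn_Ico (hpt : p ≤ t) (hF : EqOn F (fun _ => c) (Ico p t)) :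
    ∫ s in p..t, F s = (t - p) * c := by
  rw [intervalIntegral.integral_of_le hpt, integral_Ioc_eq_integral_Ioo,
    ← integral_Ico_eq_integral_Ioo, setIntegral_congr_fun measurableSet_Ico hF,
    setIntegral_const, Real.volume_real_Ico_of_le hpt, smul_eq_mul]

end ConstantOnIco

section Eating

variable {N O : Type*} [Fintype N]

noncomputable def eaters (g : N → ℝ → O) (S : Set O) (s : ℝ) : Finset N :=
  Finset.univ.filter fun i => g i s ∈ S

lemma eatenAmt_eq_integral_card_eaters (g : N → ℝ → O) (S : Set O) (t : ℝ) :
    eatenAmt g S t = ∫ s in (0:ℝ)..t, ((eaters g S s).card : ℝ) :=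
  rfl

lemma eatenAmt_zero (g : N → ℝ → O) (S : Set O) : eatenAmt g S 0 = 0 :=
  intervalIntegral.integral_same

variable {B : Finset ℝ} {g : N → ℝ → O} {S : Set O} {p t : ℝ}

lemma eaters_eq_of_mem_Ico (hg : ∀ i, StepBreaks B (g i)) (hp : 0 ≤ p) (ht : t ≤ 1)
    (hB : ∀ b ∈ B, b ∉ Ioo p t) {s : ℝ} (hs : s ∈ Ico p t) : eaters g S s = eaters g S p := by
  ext i
  simp only [eaters, Finset.mem_filter, (hg i).eq_of_mem_Ico hp ht hB hs]

lemma intervalIntegrable_card_eaters (hg : ∀ i, StepBreaks B (g i)) (ht0 : 0 ≤ t)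
    (ht1 : t ≤ 1) : IntervalIntegrable (fun s => ((eaters g S s).card : ℝ)) volume 0 t :=
  forall_mem_Icc_of_stretch_step B IntervalIntegrable.refl 1
    (fun p _ hp hpt ht hB hint => hint.trans <|
      intervalIntegrable_of_eqOn_Ico (c := (eaters g S p).card) hpt
        fun _ hs => by simp only [eaters_eq_of_mem_Ico hg hp ht hB hs])
    t ⟨ht0, ht1⟩

lemma eatenAmt_of_stretch (hg : ∀ i, StepBreaks B (g i)) (hp : 0 ≤ p) (hpt : p ≤ t)
    (ht : t ≤ 1) (hB : ∀ b ∈ B, b ∉ Ioo p t) :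
    eatenAmt g S t = eatenAmt g S p + (t - p) * (eaters g S p).card := by
  have hconst : EqOn (fun s => ((eaters g S s).card : ℝ)) (fun _ => ((eaters g S p).card : ℝ))
      (Ico p t) := fun _ hs => by simp only [eaters_eq_of_mem_Ico hg hp ht hB hs]
  rw [eatenAmt_eq_integral_card_eaters, eatenAmt_eq_integral_card_eaters,
    ← intervalIntegral.integral_add_adjacent_intervals
      (intervalIntegrable_card_eaters hg hp (hpt.trans ht))
      (intervalIntegrable_of_eqOn_Ico hpt hconst), integral_of_eqOn_Ico hpt hconst]

end Eating

section Times

lemma bddBelow_sep_union_one (R : ℝ → Prop) :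
    BddBelow ({t ∈ Icc (0:ℝ) 1 | R t} ∪ {1}) :=
  ⟨0, by rintro x (hx | rfl); exacts [hx.1.1, zero_le_one]⟩

lemma sInf_sep_union_one_mem_Icc (R : ℝ → Prop) :
    sInf ({t ∈ Icc (0:ℝ) 1 | R t} ∪ {1}) ∈ Icc (0:ℝ) 1 :=
  ⟨le_csInf ⟨1, Or.inr rfl⟩ (by rintro x (hx | rfl); exacts [hx.1.1, zero_le_one]),
    csInf_le (bddBelow_sep_union_one R) (Or.inr rfl)⟩

lemma not_of_lt_sInf_sep_union_one {R : ℝ → Prop} {s : ℝ} (hs0 : 0 ≤ s)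
    (hs : s < sInf ({t ∈ Icc (0:ℝ) 1 | R t} ∪ {1})) : ¬ R s := fun hR =>
  (csInf_le (bddBelow_sep_union_one R)
    (Or.inl ⟨⟨hs0, hs.le.trans (sInf_sep_union_one_mem_Icc R).2⟩, hR⟩)).not_gt hs

variable {N O : Type*} [Fintype N] [Fintype O] {m c : O → ℕ} {e : N → ℝ → O} {s : ℝ}

lemma globalOK_of_lt_globalTime (hs0 : 0 ≤ s) (hs : s < globalTime m e) (j : O) :
    GlobalOK m e j s :=
  not_exists_not.1 (not_of_lt_sInf_sep_union_one hs0 hs) j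

lemma available_of_lt_closeTime {j : O} (hs0 : 0 ≤ s) (hs : s < closeTime m c e j) :
    Available m c e j s :=
  not_not.1 (not_of_lt_sInf_sep_union_one hs0 hs)

end Times

namespace IsMPS

variable {N O : Type*} [Fintype N] [Fintype O] {m c : O → ℕ} {P P' : N → O → O → Prop}
  {e e' : N → ℝ → O} {i : N} {j : O} {s : ℝ}

lemma available (he : IsMPS m c P e) (i : N) (hs : s ∈ Ico (0:ℝ) 1) :
    Available m c e (e i s) s :=
  (he.2 i s hs).1

lemma prefers_of_available (he : IsMPS m c P e) (hs : s ∈ Ico (0:ℝ) 1)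
    (hj : Available m c e j s) (hne : j ≠ e i s) : P i (e i s) j :=
  (he.2 i s hs).2 j hj hne

lemma eq_of_forall_prefers [Std.Asymm (P i)] (he : IsMPS m c P e) (hs : s ∈ Ico (0:ℝ) 1)
    (hj : Available m c e j s) (htop : ∀ k, k ≠ j → P i j k) : e i s = j := by
  by_contra h
  exact asymm (htop _ h) (he.prefers_of_available hs hj (Ne.symm h))

lemma eq_of_available [Std.Asymm (P i)] (he : IsMPS m c P e) (he' : IsMPS m c P' e')
    (hPi : P' i = P i) (hs : s ∈ Ico (0:ℝ) 1) (hj : Available m c e' j s)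
    (hi' : Available m c e (e' i s) s) (hij : e i s = j) : e' i s = j := by
  by_contra h
  have h' : P i (e' i s) j := hPi ▸ he'.prefers_of_available hs hj (Ne.symm h)
  have h'' : P i (e i s) (e' i s) := he.prefers_of_available hs hi' (by rwa [hij])
  exact asymm h' (hij ▸ h'')

lemma eatenAmt_le_cap (he : IsMPS m c P e) {t : ℝ} (ht0 : 0 ≤ t) (ht1 : t ≤ 1) (j : O) :
    eatenAmt e {j} t ≤ c j := by
  obtain ⟨B, hB⟩ := exists_stepBreaks he.1
  refine forall_mem_Icc_of_stretch_step B (Q := fun t => eatenAmt e {j} t ≤ c j)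
    (by rw [eatenAmt_zero]; positivity) 1 ?_ t ⟨ht0, ht1⟩
  intro p t hp hpt ht hfree hcap
  rw [eatenAmt_of_stretch hB hp hpt ht hfree]
  rcases (eaters e {j} p).eq_empty_or_nonempty with h | ⟨i, hi⟩
  · simpa [h] using hcap
  rcases hpt.eq_or_lt with rfl | hpt
  · simpa using hcap
  -- `i` eats `j` throughout `[p, t)`, so `j` stays below capacity there
  have below : ∀ s ∈ Ico p t,
      eatenAmt e {j} p + (s - p) * (eaters e {j} p).card < c j := fun s hs => by
    have hcap_s := (he.available i ⟨hp.trans hs.1, hs.2.trans_le ht⟩).1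
    rwa [(hB i).eq_of_mem_Ico hp ht hfree hs, show e i p = j by simpa [eaters] using hi, CapOK,
      eatenAmt_of_stretch hB hp hs.1 (hs.2.le.trans ht)
        fun b hb hbI => hfree b hb ⟨hbI.1, hbI.2.trans_le hs.2.le⟩] at hcap_s
  have hlim : Tendsto (fun s => eatenAmt e {j} p + (s - p) * (eaters e {j} p).card) (𝓝[<] t)
      (𝓝 (eatenAmt e {j} p + (t - p) * (eaters e {j} p).card)) :=
    (Continuous.tendsto (by fun_prop) t).mono_left nhdsWithin_le_nhds
  exact le_of_tendsto hlim (eventually_of_mem (Ioo_mem_nhdsLT hpt) fun s hs =>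
    (below s ⟨hs.1.le, hs.2⟩).le)

end IsMPS

section Comparison

variable {N O : Type*} [Fintype N] [Fintype O] {m c : O → ℕ} {P P' : N → O → O → Prop}
  {e e' : N → ℝ → O} {s : ℝ} {b : O}

lemma eatenAmt_le_of_stretch {B : Finset ℝ} (he : IsMPS m c P e)
    (hB : ∀ i, StepBreaks B (e i)) (hB' : ∀ i, StepBreaks B (e' i)) {p t : ℝ} (hp : 0 ≤ p)
    (hpt : p ≤ t) (ht : t ≤ 1) (hfree : ∀ x ∈ B, x ∉ Ioo p t)
    (hle : eatenAmt e {b} p ≤ eatenAmt e' {b} p)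
    (hsub : CapOK c e' b p → eaters e {b} p ⊆ eaters e' {b} p) :
    eatenAmt e {b} t ≤ eatenAmt e' {b} t := by
  have he't := eatenAmt_of_stretch (S := {b}) hB' hp hpt ht hfree
  by_cases hcap : CapOK c e' b p
  · rw [eatenAmt_of_stretch hB hp hpt ht hfree, he't]
    have hrate := Nat.cast_le (α := ℝ).2 (Finset.card_le_card (hsub hcap))
    exact add_le_add hle (mul_le_mul_of_nonneg_left hrate (sub_nonneg.2 hpt))
  · calc eatenAmt e {b} t ≤ c b := he.eatenAmt_le_cap (hp.trans hpt) ht b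
      _ ≤ eatenAmt e' {b} p := not_lt.1 hcap
      _ ≤ eatenAmt e' {b} t :=
        he't ▸ le_add_of_nonneg_right (mul_nonneg (sub_nonneg.2 hpt) (Nat.cast_nonneg _))

lemma eaters_subset_eaters_of_available [∀ i, Std.Asymm (P i)] (he : IsMPS m c P e)
    (he' : IsMPS m c P' e') {i₀ : N} {a : O} (hP' : ∀ i, i ≠ i₀ → P' i = P i)
    (hs : s ∈ Ico (0:ℝ) 1) (hi₀ : e i₀ s = a) (ha : Available m c e a s)
    (hglob : ∀ j, GlobalOK m e j s) (hle : ∀ j, j ≠ a → eatenAmt e {j} s ≤ eatenAmt e' {j} s)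
    (hba : b ≠ a) (hb : Available m c e' b s) : eaters e {b} s ⊆ eaters e' {b} s := by
  intro i hi
  simp only [eaters, Finset.mem_filter, Finset.mem_univ, true_and, mem_singleton_iff]
    at hi ⊢
  have hii₀ : i ≠ i₀ := by
    rintro rfl
    exact hba (hi.symm.trans hi₀)
  have hi' : Available m c e (e' i s) s := by
    by_cases hja : e' i s = a
    · rwa [hja]
    · exact ⟨(hle _ hja).trans_lt (he'.available i hs).1, hglob _⟩
  exact he.eq_of_available he' (hP' i hii₀) hs hb hi' hi

end Comparison

theorem MPS_lemma_sp1_general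
    {N O : Type*} [Fintype N] [Fintype O]
    (m c : O → ℕ)
    (P : N → O → O → Prop) (hP : ∀ i, IsStrictTotalOrder O (P i))
    (i₀ : N) (a : O) (ha : ∀ j : O, j ≠ a → P i₀ a j)
    (P₁' : O → O → Prop)
    (P' : N → O → O → Prop)
    (hP' : P' = fun i => if i = i₀ then P₁' else P i)
    (e e' : N → ℝ → O) (he : IsMPS m c P e) (he' : IsMPS m c P' e')
    (hta : globalTime m e ≤ closeTime m c e a)
    (hτ : globalTime m e ≤ globalTime m e') :
    ∀ b : O, b ≠ a →
      eatenAmt e {b} (globalTime m e) ≤ eatenAmt e' {b} (globalTime m e) := by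
  have : ∀ i, Std.Asymm (P i) := fun i => by have := hP i; infer_instance
  have hτ01 : globalTime m e ∈ Icc (0:ℝ) 1 := sInf_sep_union_one_mem_Icc _
  have hP'i : ∀ i, i ≠ i₀ → P' i = P i := fun i hi => by simp [hP', hi]
  obtain ⟨B, hB⟩ := exists_stepBreaks he.1
  obtain ⟨B', hB'⟩ := exists_stepBreaks he'.1
  refine forall_mem_Icc_of_stretch_step (B ∪ B')
    (Q := fun t => ∀ b, b ≠ a → eatenAmt e {b} t ≤ eatenAmt e' {b} t)
    (fun b _ => by rw [eatenAmt_zero, eatenAmt_zero]) (globalTime m e) ?_ _ ⟨hτ01.1, le_rfl⟩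
  intro p t hp hpt htτ hfree hle b hba
  rcases hpt.eq_or_lt with rfl | hpt'
  · exact hle b hba
  have hpτ : p < globalTime m e := hpt'.trans_le htτ
  have hs : p ∈ Ico (0:ℝ) 1 := ⟨hp, hpτ.trans_le hτ01.2⟩
  have hav_a : Available m c e a p := available_of_lt_closeTime hp (hpτ.trans_le hta)
  have hi₀ : e i₀ p = a := he.eq_of_forall_prefers hs hav_a ha
  exact eatenAmt_le_of_stretch he (fun i => (hB i).mono Finset.subset_union_left)
    (fun i => (hB' i).mono Finset.subset_union_right) hp hpt (htτ.trans hτ01.2) hfree (hle b hba)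
    fun hcap => eaters_subset_eaters_of_available he he' hP'i hs hi₀ hav_a
      (globalOK_of_lt_globalTime hp hpτ) hle hba
      ⟨hcap, globalOK_of_lt_globalTime hp (hpτ.trans_le hτ) b⟩

/-- Lemma sp1: If agent `i₀`'s favorite object `a` closes no
earlier than `τ` (truthful run) and `τ' ≥ τ`, then every other object has been
consumed at least as much by time `τ` under the misreport run as under the
truthful run. -/
theorem MPS_lemma_sp1
    {N O : Type*} [Fintype N] [Fintype O] [Nonempty N] [Nonempty O]
    (m c : O → ℕ)
    (hc1 : ∀ j, 1 ≤ c j) (hc2 : ∀ j, c j ≤ Fintype.card N)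
    (hfeasc : Fintype.card N ≤ ∑ j, c j)
    (hfeasm : ∑ j, m j ≤ Fintype.card N)
    (P : N → O → O → Prop) (hP : ∀ i, IsStrictTotalOrder O (P i))
    (i₀ : N) (a : O) (ha : ∀ j : O, j ≠ a → P i₀ a j)
    (P₁' : O → O → Prop) (hP₁' : IsStrictTotalOrder O P₁')
    (P' : N → O → O → Prop)
    (hP' : P' = fun i => if i = i₀ then P₁' else P i)
    (e e' : N → ℝ → O) (he : IsMPS m c P e) (he' : IsMPS m c P' e')
    (hta : globalTime m e ≤ closeTime m c e a)
    (hτ : globalTime m e ≤ globalTime m e') :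
    ∀ b : O, b ≠ a →
      eatenAmt e {b} (globalTime m e) ≤ eatenAmt e' {b} (globalTime m e) :=
  MPS_lemma_sp1_general m c P hP i₀ a ha P₁' P' hP' e e' he he' hta hτ
end

section
/- Fix a market with unit demand d = 1, a truthful preference profile ≻, a distinguished agent 1 with ≻_1-most-preferred object a and misreport ≻'_1, an MPS eating profile e for ≻ and an MPS eating profile e' for ≻' = (≻'_1, (≻_i)_{i≠1}). For t ∈ [0,1] define μ_{-1,a}(t,e) = ∫_0^t |{i ∈ N, i ≠ 1 : e_i(s) = a}| ds and likewise μ_{-1,a}(t,e'). If t_a < t'_a, then μ_{-1,a}(t_a, e) ≤ μ_{-1,a}(t_a, e'). -/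
open MeasureTheory Finset
open scoped Classical

/-!
Up to `t_a`, agent `i₀` eats `a` in `e`, and every object available in the misreport run `e'` is
also available in the truthful run `e`. The latter is proved by real induction. If it holds
before `t`, an agent `i ≠ i₀` who eats `k ≠ a` in `e` also eats `k` in `e'`: the preferences
agree and `k`, still available in `e'`, is the best choice on the larger menu of `e`. Hence every
object other than `a` has been consumed at least as much in `e'` by time `t`, so neither its
capacity nor the global minimums constraint can close in `e` an object that is still open in `e'`.
Availability in `e` persists for a short while, which carries the invariant past `t`. Finally,
`a` is still available in `e'` before `t_a < t'_a`, so the same choice argument compares the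
integrands pointwise.
-/

open Set Filter Topology

theorem Set.forall_mem_Ico_of_eventually_nhdsGE {α : Type*} [ConditionallyCompleteLinearOrder α]
    [TopologicalSpace α] [OrderTopology α] {a b : α} {p : α → Prop}
    (h : ∀ t ∈ Ico a b, (∀ s ∈ Ico a t, p s) → ∀ᶠ s in 𝓝[≥] t, p s) :
    ∀ t ∈ Ico a b, p t := by
  by_contra! ⟨t₀, ht₀, hpt₀⟩
  set bad := {t | t ∈ Ico a b ∧ ¬ p t}
  have hbad : bad.Nonempty := ⟨t₀, ht₀, hpt₀⟩
  have hbdd : BddBelow bad := ⟨a, fun t ht => ht.1.1⟩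
  have hz : sInf bad ∈ Ico a b :=
    ⟨le_csInf hbad fun t ht => ht.1.1, (csInf_le hbdd ⟨ht₀, hpt₀⟩).trans_lt ht₀.2⟩
  have hbelow : ∀ s ∈ Ico a (sInf bad), p s := fun s hs => by
    by_contra hps
    exact (notMem_of_lt_csInf hs.2 hbdd) ⟨⟨hs.1, hs.2.trans hz.2⟩, hps⟩
  obtain ⟨t, hpt, -, hnpt⟩ :=
    ((h _ hz hbelow).and_frequently ((isGLB_csInf hbad hbdd).frequently_mem hbad)).exists
  exact hnpt hpt

theorem MeasureTheory.aestronglyMeasurable_of_ae_continuousAt {α : Type*}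
    [TopologicalSpace α] [MeasurableSpace α] [OpensMeasurableSpace α] {μ : Measure α}
    {f : α → ℝ} (hf : ∀ᵐ x ∂μ, ContinuousAt f x) : AEStronglyMeasurable f μ := by
  have hcont : ContinuousOn f {x | ContinuousAt f x} := fun _ hx => hx.continuousWithinAt
  have h := hcont.aestronglyMeasurable (μ := μ) (measurableSet_of_continuousAt f)
  rwa [Measure.restrict_eq_self_of_ae_mem (s := {x | ContinuousAt f x}) hf] at h

theorem RightContStep.ae_eventually_eq {O : Type*} {f : ℝ → O} (hf : RightContStep f) :
    ∀ᵐ s ∂(volume.restrict (Ioo 0 1)), ∀ᶠ t in 𝓝 s, f t = f s := by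
  obtain ⟨B, hB⟩ := hf
  rw [ae_restrict_iff' measurableSet_Ioo]
  filter_upwards [B.countable_toSet.ae_notMem volume] with s hsB hs
  have hopen : IsOpen (Ioo 0 1 \ (B : Set ℝ)) := isOpen_Ioo.sdiff B.finite_toSet.isClosed
  obtain ⟨l, r, ⟨hl, hr⟩, hlr⟩ := mem_nhds_iff_exists_Ioo_subset.1 (hopen.mem_nhds ⟨hs, hsB⟩)
  have hgap : ∀ x y, x ∈ Ioo l r → y ∈ Ioo l r → x ≤ y → ∀ b ∈ B, ¬ (x < b ∧ b ≤ y) :=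
    fun x y hx hy _ b hb hxby => (hlr ⟨hx.1.trans hxby.1, hxby.2.trans_lt hy.2⟩).2 hb
  have hIco : ∀ x ∈ Ioo l r, x ∈ Ico (0 : ℝ) 1 := fun x hx => Ioo_subset_Ico_self (hlr hx).1
  filter_upwards [Ioo_mem_nhds hl hr] with t ht
  rcases le_total s t with hst | hts
  · exact hB s (hIco s ⟨hl, hr⟩) t (hIco t ht) hst (hgap s t ⟨hl, hr⟩ ht hst)
  · exact (hB t (hIco t ht) s (hIco s ⟨hl, hr⟩) hts (hgap t s ht ⟨hl, hr⟩ hts)).symm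

theorem integrableOn_comp_profile {N O : Type*} [Finite N] [Finite O] {e : N → ℝ → O}
    (he : ∀ i, RightContStep (e i)) (F : (N → O) → ℝ) :
    IntegrableOn (fun s => F (fun i => e i s)) (Icc 0 1) := by
  obtain ⟨M, hM⟩ := (finite_range fun x => ‖F x‖).bddAbove
  rw [integrableOn_Icc_iff_integrableOn_Ioo]
  refine Integrable.of_bound (aestronglyMeasurable_of_ae_continuousAt ?_) M
    (ae_of_all _ fun s => hM ⟨_, rfl⟩)
  filter_upwards [ae_all_iff.2 fun i => (he i).ae_eventually_eq] with s hs
  refine (continuousAt_const (y := F fun i => e i s)).congr ?_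
  filter_upwards [eventually_all.2 hs] with t ht
  simp only [ht]

theorem intervalIntegrable_comp_profile {N O : Type*} [Finite N] [Finite O] {e : N → ℝ → O}
    (he : ∀ i, RightContStep (e i)) (F : (N → O) → ℝ) {u v : ℝ}
    (hu : u ∈ Icc (0 : ℝ) 1) (hv : v ∈ Icc (0 : ℝ) 1) :
    IntervalIntegrable (fun s => F (fun i => e i s)) volume u v :=
  ((integrableOn_comp_profile he F).mono_set (uIcc_subset_Icc hu hv)).intervalIntegrable

theorem integral_comp_profile_mono {N O : Type*} [Finite N] [Finite O] {e e' : N → ℝ → O}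
    (he : ∀ i, RightContStep (e i)) (he' : ∀ i, RightContStep (e' i)) {F G : (N → O) → ℝ}
    {u v : ℝ} (hu : u ∈ Icc (0 : ℝ) 1) (hv : v ∈ Icc (0 : ℝ) 1) (huv : u ≤ v)
    (h : ∀ s ∈ Ico u v, F (fun i => e i s) ≤ G (fun i => e' i s)) :
    ∫ s in u..v, F (fun i => e i s) ≤ ∫ s in u..v, G (fun i => e' i s) := by
  refine intervalIntegral.integral_mono_ae_restrict huv
    (intervalIntegrable_comp_profile he F hu hv) (intervalIntegrable_comp_profile he' G hu hv) ?_
  rw [EventuallyLE, ae_restrict_iff' measurableSet_Icc]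
  filter_upwards [(countable_singleton v).ae_notMem volume] with s hsv hs
  exact h s ⟨hs.1, lt_of_le_of_ne hs.2 hsv⟩

section Eating

variable {N O : Type*} [Fintype N] [Fintype O] {e : N → ℝ → O}

theorem eatenAmt_add_integral (he : ∀ i, RightContStep (e i)) (S : Set O) {u v : ℝ}
    (hu : u ∈ Icc (0 : ℝ) 1) (hv : v ∈ Icc (0 : ℝ) 1) :
    eatenAmt e S u + ∫ s in u..v, (#(univ.filter fun i => e i s ∈ S) : ℝ) = eatenAmt e S v :=
  intervalIntegral.integral_add_adjacent_intervals
    (intervalIntegrable_comp_profile he (fun x => (#(univ.filter fun i => x i ∈ S) : ℝ))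
      ⟨le_rfl, zero_le_one⟩ hu)
    (intervalIntegrable_comp_profile he (fun x => (#(univ.filter fun i => x i ∈ S) : ℝ)) hu hv)

theorem eatenAmt_monotoneOn (he : ∀ i, RightContStep (e i)) (S : Set O) :
    MonotoneOn (eatenAmt e S) (Icc 0 1) := fun u hu v hv huv => by
  rw [← eatenAmt_add_integral he S hu hv, le_add_iff_nonneg_right]
  exact intervalIntegral.integral_nonneg huv fun _ _ => Nat.cast_nonneg _

theorem eatenAmt_continuousOn (he : ∀ i, RightContStep (e i)) (S : Set O) :
    ContinuousOn (eatenAmt e S) (Icc 0 1) := by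
  have h := integrableOn_comp_profile he fun x => (#(univ.filter fun i => x i ∈ S) : ℝ)
  rw [← Set.uIcc_of_le zero_le_one] at h ⊢
  exact intervalIntegral.continuousOn_primitive_interval h

theorem eatenAmt_eq_of_forall_notMem (he : ∀ i, RightContStep (e i)) (S : Set O) {u v : ℝ}
    (hu : u ∈ Icc (0 : ℝ) 1) (hv : v ∈ Icc (0 : ℝ) 1) (huv : u ≤ v)
    (h : ∀ s ∈ Ico u v, ∀ i, e i s ∉ S) : eatenAmt e S v = eatenAmt e S u := by
  have hle := integral_comp_profile_mono he he
    (F := fun x => #(univ.filter fun i => x i ∈ S)) (G := fun _ => 0) hu hv huv fun s hs => by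
      simp [filter_eq_empty_iff.2 fun i _ => h s hs i]
  rw [intervalIntegral.integral_zero] at hle
  exact le_antisymm (by linarith [eatenAmt_add_integral he S hu hv])
    (eatenAmt_monotoneOn he S hu hv huv)

end Eating

theorem exists_pos_max_add_le_iff {m x r n : ℝ} :
    (∃ ε > 0, max m (x + ε) + r ≤ n) ↔ max m x + r < n ∨ (x < m ∧ max m x + r ≤ n) := by
  constructor
  · rintro ⟨ε, hε, h⟩
    rcases lt_or_ge x m with hxm | hmx
    · exact Or.inr ⟨hxm, by linarith [max_le_max_left m (by linarith : x ≤ x + ε)]⟩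
    · exact Or.inl (by rw [max_eq_right hmx]; linarith [le_max_right m (x + ε)])
  · rintro (h | ⟨hxm, h⟩)
    · refine ⟨n - (max m x + r), by linarith, ?_⟩
      have : max m (x + (n - (max m x + r))) ≤ max m x + (n - (max m x + r)) :=
        max_le (by linarith [le_max_left m x]) (by linarith [le_max_right m x])
      linarith
    · refine ⟨m - x, by linarith, ?_⟩
      rwa [add_sub_cancel, max_self, ← max_eq_left hxm.le]

section Market

variable {N O : Type*} [Fintype N] [Fintype O] {m c : O → ℕ} {e : N → ℝ → O}

def availableSet (m c : O → ℕ) (e : N → ℝ → O) (t : ℝ) : Set O :=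
  {j | Available m c e j t}

noncomputable def committedAmt (m : O → ℕ) (e : N → ℝ → O) (t : ℝ) : ℝ :=
  ∑ k, max (m k : ℝ) (eatenAmt e {k} t)

theorem committedAmt_continuousOn (he : ∀ i, RightContStep (e i)) :
    ContinuousOn (committedAmt m e) (Icc 0 1) :=
  continuousOn_finsetSum _ fun k _ => continuousOn_const.sup (eatenAmt_continuousOn he {k})

theorem globalOK_iff {j : O} {t : ℝ} :
    GlobalOK m e j t ↔ committedAmt m e t < Fintype.card N ∨
      (eatenAmt e {j} t < m j ∧ committedAmt m e t ≤ Fintype.card N) := by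
  rw [GlobalOK, committedAmt, ← add_sum_erase _ _ (mem_univ j)]
  exact exists_pos_max_add_le_iff

theorem availableSet_antitoneOn (he : ∀ i, RightContStep (e i)) :
    AntitoneOn (availableSet m c e) (Icc 0 1) := by
  rintro u hu v hv huv j ⟨hcap, ε, hε, hglob⟩
  have hmono (k : O) := eatenAmt_monotoneOn he {k} hu hv huv
  refine ⟨(hmono j).trans_lt hcap, ε, hε, le_trans (add_le_add ?_ ?_) hglob⟩
  · exact max_le_max le_rfl (by linarith [hmono j])
  · exact sum_le_sum fun k _ => max_le_max le_rfl (hmono k)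

variable {P : N → O → O → Prop}

theorem IsMPS.eatenAmt_le_cap_s15 (he : IsMPS m c P e) (j : O) {t : ℝ} (ht : t ∈ Icc (0 : ℝ) 1) :
    eatenAmt e {j} t ≤ c j := by
  by_contra! hlt
  obtain ⟨z, hz, hzc⟩ : (c j : ℝ) ∈ eatenAmt e {j} '' Icc 0 t :=
    intermediate_value_Icc ht.1 ((eatenAmt_continuousOn he.1 _).mono (Icc_subset_Icc_right ht.2))
      ⟨by simp [eatenAmt], hlt.le⟩
  have hzI : z ∈ Icc (0 : ℝ) 1 := ⟨hz.1, hz.2.trans ht.2⟩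
  -- from time `z` on, (Cap) keeps everybody off `j`
  have hstall := eatenAmt_eq_of_forall_notMem he.1 {j} hzI ht hz.2 fun s hs i hij => by
    have hs1 : s ∈ Ico (0 : ℝ) 1 := ⟨hz.1.trans hs.1, hs.2.trans_le ht.2⟩
    have hcap : CapOK c e (e i s) s := (he.2 i s hs1).1.1
    rw [mem_singleton_iff.1 hij, CapOK] at hcap
    linarith [eatenAmt_monotoneOn he.1 {j} hzI (Ico_subset_Icc_self hs1) hs.1]
  linarith

theorem closeTime_le_one (m c : O → ℕ) (e : N → ℝ → O) (j : O) : closeTime m c e j ≤ 1 :=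
  csInf_le ⟨0, fun _ ht => ht.elim (fun h => h.1.1) fun h => h ▸ zero_le_one⟩ (Or.inr rfl)

theorem closeTime_nonneg (m c : O → ℕ) (e : N → ℝ → O) (j : O) : 0 ≤ closeTime m c e j :=
  le_csInf ⟨1, Or.inr rfl⟩ fun _ ht => ht.elim (fun h => h.1.1) fun h => h ▸ zero_le_one

theorem mem_availableSet_of_lt_closeTime {j : O} {t : ℝ} (ht : t ∈ Ico 0 (closeTime m c e j)) :
    j ∈ availableSet m c e t := by
  by_contra hj
  refine (ht.2.trans_le (csInf_le ⟨0, fun _ hs => ?_⟩ (Or.inl ⟨⟨ht.1, ?_⟩, hj⟩))).false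
  · exact hs.elim (fun h => h.1.1) fun h => h ▸ zero_le_one
  · exact ht.2.le.trans (closeTime_le_one m c e j)

theorem IsMPS.committedAmt_le_card [Nonempty N] (he : IsMPS m c P e) {t : ℝ}
    (ht : t ∈ Ico (0 : ℝ) 1) : committedAmt m e t ≤ Fintype.card N := by
  obtain ⟨i⟩ := ‹Nonempty N›
  rcases globalOK_iff.1 (he.2 i t ht).1.2 with h | h
  · exact h.le
  · exact h.2

theorem IsMPS.globalOK_iff [Nonempty N] (he : IsMPS m c P e) {j : O} {t : ℝ}
    (ht : t ∈ Ico (0 : ℝ) 1) :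
    GlobalOK m e j t ↔ committedAmt m e t < Fintype.card N ∨ eatenAmt e {j} t < m j := by
  have := he.committedAmt_le_card ht
  rw [_root_.globalOK_iff]
  tauto

theorem IsMPS.eventually_availableSet_superset [Nonempty N] (he : IsMPS m c P e) {t : ℝ}
    (ht : t ∈ Ico (0 : ℝ) 1) : ∀ᶠ s in 𝓝[≥] t, availableSet m c e t ⊆ availableSet m c e s := by
  have hIcc : Icc (0 : ℝ) 1 ∈ 𝓝[≥] t :=
    mem_of_superset (Icc_mem_nhdsGE ht.2) (Icc_subset_Icc_left ht.1)
  have hIco : Ico (0 : ℝ) 1 ∈ 𝓝[≥] t :=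
    mem_of_superset (Ico_mem_nhdsGE ht.2) (Ico_subset_Ico_left ht.1)
  have htI := Ico_subset_Icc_self ht
  have hC : Tendsto (committedAmt m e) (𝓝[≥] t) (𝓝 (committedAmt m e t)) :=
    ((committedAmt_continuousOn he.1).continuousWithinAt htI).mono_of_mem_nhdsWithin hIcc
  refine eventually_all.2 fun j => ?_
  by_cases hj : j ∈ availableSet m c e t
  · obtain ⟨hcap, hglob⟩ := hj
    have hμ : Tendsto (eatenAmt e {j}) (𝓝[≥] t) (𝓝 (eatenAmt e {j} t)) :=
      ((eatenAmt_continuousOn he.1 {j}).continuousWithinAt htI).mono_of_mem_nhdsWithin hIcc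
    have hglob' : ∀ᶠ s in 𝓝[≥] t,
        committedAmt m e s < Fintype.card N ∨ eatenAmt e {j} s < m j :=
      ((he.globalOK_iff ht).1 hglob).elim (fun h => (hC.eventually_lt_const h).mono fun _ => .inl)
        fun h => (hμ.eventually_lt_const h).mono fun _ => .inr
    filter_upwards [hIco, hμ.eventually_lt_const hcap, hglob'] with s hs hcap' hglob' _
    exact ⟨hcap', (he.globalOK_iff hs).2 hglob'⟩
  · exact Eventually.of_forall fun _ h => absurd h hj

theorem IsMPS.eq_of_top_mem_availableSet (he : IsMPS m c P e) {i : N} {a : O}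
    [Std.Asymm (P i)] (ha : ∀ j, j ≠ a → P i a j) {t : ℝ} (ht : t ∈ Ico (0 : ℝ) 1)
    (hav : a ∈ availableSet m c e t) : e i t = a := by
  by_contra hne
  exact asymm (ha _ hne) ((he.2 i t ht).2 a hav (Ne.symm hne))

theorem IsMPS.eq_of_availableSet_subset {P' : N → O → O → Prop} {e' : N → ℝ → O}
    (he : IsMPS m c P e) (he' : IsMPS m c P' e') {i : N} (hPi : P' i = P i) [Std.Asymm (P i)]
    {t : ℝ} (ht : t ∈ Ico (0 : ℝ) 1) (hsub : availableSet m c e' t ⊆ availableSet m c e t)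
    (hi : e i t ∈ availableSet m c e' t) : e' i t = e i t := by
  by_contra hne
  have h' : P i (e' i t) (e i t) := hPi ▸ (he'.2 i t ht).2 _ hi (Ne.symm hne)
  exact asymm h' ((he.2 i t ht).2 _ (hsub (he'.2 i t ht).1) hne)

end Market

section Misreport

variable {N O : Type*} [Fintype N] [Fintype O] {m c : O → ℕ} {P P' : N → O → O → Prop}
  {e e' : N → ℝ → O} {i₀ : N} {a : O} [∀ i, Std.Asymm (P i)]

theorem eatenAmt_le_of_subset_availableSet (he : IsMPS m c P e) (he' : IsMPS m c P' e')
    (hagree : ∀ i, i ≠ i₀ → P' i = P i) {t : ℝ} (ht : t ∈ Icc (0 : ℝ) 1)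
    (hi₀ : ∀ s ∈ Ico 0 t, e i₀ s = a)
    (hsub : ∀ s ∈ Ico 0 t, availableSet m c e' s ⊆ availableSet m c e s)
    {S : Set O} (haS : a ∉ S) (hS : S ⊆ availableSet m c e' t) :
    eatenAmt e S t ≤ eatenAmt e' S t := by
  refine integral_comp_profile_mono he.1 he'.1 (F := fun x => #(univ.filter fun i => x i ∈ S))
    (G := fun x => #(univ.filter fun i => x i ∈ S)) ⟨le_rfl, zero_le_one⟩ ht ht.1 fun s hs => ?_
  have hs1 : s ∈ Ico (0 : ℝ) 1 := ⟨hs.1, hs.2.trans_le ht.2⟩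
  refine Nat.cast_le.2 (card_le_card (monotone_filter_right _ fun i _ hiS => ?_))
  dsimp only at hiS ⊢
  have hii₀ : i ≠ i₀ := by
    rintro rfl
    exact haS (hi₀ s hs ▸ hiS)
  have hav : e i s ∈ availableSet m c e' s :=
    availableSet_antitoneOn he'.1 (Ico_subset_Icc_self hs1) ht hs.2.le (hS hiS)
  rwa [he.eq_of_availableSet_subset he' (hagree i hii₀) hs1 (hsub s hs) hav]

theorem committedAmt_le_of_forall_globalOK (he : IsMPS m c P e) (he' : IsMPS m c P' e')
    (hagree : ∀ i, i ≠ i₀ → P' i = P i) {t : ℝ} (ht : t ∈ Icc (0 : ℝ) 1)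
    (hi₀ : ∀ s ∈ Ico 0 t, e i₀ s = a)
    (hsub : ∀ s ∈ Ico 0 t, availableSet m c e' s ⊆ availableSet m c e s)
    (ha : eatenAmt e {a} t < m a) (hglob : ∀ k, GlobalOK m e' k t) :
    committedAmt m e t ≤ committedAmt m e' t := by
  refine sum_le_sum fun k _ => ?_
  by_cases hka : k = a
  · subst hka
    exact (max_eq_left ha.le).trans_le (le_max_left _ _)
  refine max_le_max le_rfl ?_
  by_cases hcap : CapOK c e' k t
  · exact eatenAmt_le_of_subset_availableSet he he' hagree ht hi₀ hsub
      (by simpa [eq_comm] using hka) (by simpa using ⟨hcap, hglob k⟩)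
  · exact (he.eatenAmt_le_cap_s15 k ht).trans (not_lt.1 hcap)

theorem availableSet_subset_of_forall_lt [Nonempty N] (he : IsMPS m c P e)
    (he' : IsMPS m c P' e') (hagree : ∀ i, i ≠ i₀ → P' i = P i) {t : ℝ}
    (ht : t ∈ Ico (0 : ℝ) 1) (ha : a ∈ availableSet m c e t) (hi₀ : ∀ s ∈ Ico 0 t, e i₀ s = a)
    (hsub : ∀ s ∈ Ico 0 t, availableSet m c e' s ⊆ availableSet m c e s) :
    availableSet m c e' t ⊆ availableSet m c e t := by
  intro j hj
  by_cases hja : j = a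
  · rwa [hja]
  have htI := Ico_subset_Icc_self ht
  have hμj := eatenAmt_le_of_subset_availableSet he he' hagree htI hi₀ hsub (S := {j})
    (by simpa [eq_comm] using hja) (by simpa using hj)
  refine ⟨hμj.trans_lt hj.1, ?_⟩
  by_contra hglob
  rw [he.globalOK_iff ht, not_or, not_lt, not_lt] at hglob
  have hma : eatenAmt e {a} t < m a :=
    ((he.globalOK_iff ht).1 ha.2).resolve_left (not_lt.2 hglob.1)
  have hfull : (Fintype.card N : ℝ) ≤ committedAmt m e' t := by
    by_cases hall : ∀ k, GlobalOK m e' k t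
    · exact hglob.1.trans (committedAmt_le_of_forall_globalOK he he' hagree htI hi₀ hsub hma hall)
    · obtain ⟨k, hk⟩ := not_forall.1 hall
      rw [he'.globalOK_iff ht, not_or, not_lt] at hk
      exact hk.1
  rcases (he'.globalOK_iff ht).1 hj.2 with h | h <;> linarith [hglob.2]

theorem availableSet_subset_of_lt_closeTime [Nonempty N] (he : IsMPS m c P e)
    (he' : IsMPS m c P' e') (hagree : ∀ i, i ≠ i₀ → P' i = P i) (ha : ∀ j, j ≠ a → P i₀ a j) :
    ∀ t ∈ Ico 0 (closeTime m c e a), availableSet m c e' t ⊆ availableSet m c e t := by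
  refine Set.forall_mem_Ico_of_eventually_nhdsGE fun t ht hbelow => ?_
  have ht1 : t ∈ Ico (0 : ℝ) 1 := ⟨ht.1, ht.2.trans_le (closeTime_le_one m c e a)⟩
  have hsub := availableSet_subset_of_forall_lt he he' hagree ht1
    (mem_availableSet_of_lt_closeTime ht)
    (fun s hs => he.eq_of_top_mem_availableSet ha ⟨hs.1, hs.2.trans ht1.2⟩
      (mem_availableSet_of_lt_closeTime ⟨hs.1, hs.2.trans ht.2⟩))
    hbelow
  have hIcc : Icc (0 : ℝ) 1 ∈ 𝓝[≥] t :=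
    mem_of_superset (Icc_mem_nhdsGE ht1.2) (Icc_subset_Icc_left ht1.1)
  filter_upwards [self_mem_nhdsWithin, hIcc, he.eventually_availableSet_superset ht1]
    with s hts hs hsup
  exact (availableSet_antitoneOn he'.1 (Ico_subset_Icc_self ht1) hs hts).trans (hsub.trans hsup)

end Misreport

theorem MPS_lemma_sp3_general
    {N O : Type*} [Fintype N] [Fintype O] [Nonempty N]
    (m c : O → ℕ)
    (P : N → O → O → Prop) (hP : ∀ i, IsStrictTotalOrder O (P i))
    (i₀ : N) (a : O) (ha : ∀ j : O, j ≠ a → P i₀ a j)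
    (P₁' : O → O → Prop)
    (P' : N → O → O → Prop)
    (hP' : P' = fun i => if i = i₀ then P₁' else P i)
    (e e' : N → ℝ → O) (he : IsMPS m c P e) (he' : IsMPS m c P' e') :
    closeTime m c e a < closeTime m c e' a →
      (∫ s in (0:ℝ)..(closeTime m c e a),
          ((Finset.univ.filter (fun i : N => i ≠ i₀ ∧ e i s = a)).card : ℝ)) ≤
        ∫ s in (0:ℝ)..(closeTime m c e a),
          ((Finset.univ.filter (fun i : N => i ≠ i₀ ∧ e' i s = a)).card : ℝ) := by
  intro hlt
  have hagree : ∀ i, i ≠ i₀ → P' i = P i := fun i hi => by simp [hP', hi]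
  have hsub := availableSet_subset_of_lt_closeTime he he' hagree ha
  refine integral_comp_profile_mono he.1 he'.1
    (F := fun x => #(univ.filter fun i => i ≠ i₀ ∧ x i = a))
    (G := fun x => #(univ.filter fun i => i ≠ i₀ ∧ x i = a))
    ⟨le_rfl, zero_le_one⟩ ⟨closeTime_nonneg m c e a, closeTime_le_one m c e a⟩
    (closeTime_nonneg m c e a) fun s hs => ?_
  have hs1 : s ∈ Ico (0 : ℝ) 1 := ⟨hs.1, hs.2.trans_le (closeTime_le_one m c e a)⟩
  refine Nat.cast_le.2 (card_le_card (monotone_filter_right _ fun i _ ⟨hi, hia⟩ => ⟨hi, ?_⟩))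
  dsimp only at hia ⊢
  have hav : e i s ∈ availableSet m c e' s :=
    hia ▸ mem_availableSet_of_lt_closeTime ⟨hs.1, hs.2.trans hlt⟩
  rw [he.eq_of_availableSet_subset he' (hagree i hi) hs1 (hsub s hs) hav, hia]

/-- Lemma sp3: If agent `i₀`'s favorite object `a` closes
strictly earlier in the truthful run than in the misreport run, then the
consumption of `a` by the agents other than `i₀` up to time `t_a` is weakly
larger in the misreport run. -/
theorem MPS_lemma_sp3
    {N O : Type*} [Fintype N] [Fintype O] [Nonempty N] [Nonempty O]
    (m c : O → ℕ)
    (hc1 : ∀ j, 1 ≤ c j) (hc2 : ∀ j, c j ≤ Fintype.card N)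
    (hfeasc : Fintype.card N ≤ ∑ j, c j)
    (hfeasm : ∑ j, m j ≤ Fintype.card N)
    (P : N → O → O → Prop) (hP : ∀ i, IsStrictTotalOrder O (P i))
    (i₀ : N) (a : O) (ha : ∀ j : O, j ≠ a → P i₀ a j)
    (P₁' : O → O → Prop) (hP₁' : IsStrictTotalOrder O P₁')
    (P' : N → O → O → Prop)
    (hP' : P' = fun i => if i = i₀ then P₁' else P i)
    (e e' : N → ℝ → O) (he : IsMPS m c P e) (he' : IsMPS m c P' e') :
    closeTime m c e a < closeTime m c e' a →
      (∫ s in (0:ℝ)..(closeTime m c e a),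
          ((Finset.univ.filter (fun i : N => i ≠ i₀ ∧ e i s = a)).card : ℝ)) ≤
        ∫ s in (0:ℝ)..(closeTime m c e a),
          ((Finset.univ.filter (fun i : N => i ≠ i₀ ∧ e' i s = a)).card : ℝ) :=
  MPS_lemma_sp3_general m c P hP i₀ a ha P₁' P' hP' e e' he he'
end
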